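/- arXiv:math/0512191 — 12 statements merged into one kernel-verified Lean document; each statement's English description precedes it below -/
import Mathlib

section
/- Let $X_1,\dots,X_n$ be exchangeable $\{0,1\}$-valued random variables and $l \ge n$. Then $(X_1,\dots,X_n)$ extends to an exchangeable sequence $(Y_1,\dots,Y_l)$ of $\{0,1\}$-valued random variables if and only if there exists a $\{0,1,\dots,l\}$-valued random variable $N$ such that for all $1 \le k \le n$, $P(X_1=1,\dots,X_k=1) = E[N(N-1)\cdots(N-k+1)]/(l(l-1)\cdots(l-k+1))$. -/
/-!
An exchangeable law on `{0,1}^l` is determined by the law of its number `N` of ones: given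
`N = m`, all `choose l m` arrangements of the ones are equally likely. Counting the injective
`k`-tuples of positions that carry ones gives `E[N (N-1) ⋯ (N-k+1)] = l (l-1) ⋯ (l-k+1) P(A_k)`,
where `A_k` is the event that the first `k` coordinates are ones; this is the forward direction,
with `N` the number of ones of the extension. Conversely, the law of `N` defines an urn law on
`{0,1}^l`. Its restriction to the first `n` coordinates is exchangeable and has the same
probabilities `P(A_k)` as the given law, and these probabilities determine an exchangeable law on
`{0,1}^n`: `A_k` consists of the atom `1^k 0^(n-k)` and of atoms with more than `k` ones, so the
masses of the atoms are recovered by downward induction on `k`.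
-/

open MeasureTheory Finset
open scoped ENNReal

def Exchangeable {ι α : Type*} [MeasurableSpace α] (μ : Measure (ι → α)) : Prop :=
  ∀ π : Equiv.Perm ι, μ.map (fun f => f ∘ π) = μ

section Counting

variable {ι : Type*} [Fintype ι]

def trueCount (f : ι → Bool) : ℕ := #{i | f i = true}

lemma trueCount_le_card (f : ι → Bool) : trueCount f ≤ Fintype.card ι :=
  card_filter_le _ _

lemma trueCount_comp_perm (f : ι → Bool) (π : Equiv.Perm ι) :
    trueCount (f ∘ π) = trueCount f := by
  simpa [trueCount, Finset.map_filter] using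
    (card_map (f := π.toEmbedding) (s := ({i | f (π i) = true} : Finset ι))).symm

lemma exists_perm_eq_comp_of_trueCount_eq {f g : ι → Bool} (h : trueCount f = trueCount g) :
    ∃ π : Equiv.Perm ι, g = f ∘ π := by
  classical
  obtain ⟨π, hπ⟩ := Equiv.Perm.exists_map_finset_eq _ _ h.symm
  refine ⟨π, funext fun i => Bool.eq_iff_iff.2 ?_⟩
  have := congrArg (π i ∈ ·) hπ
  simpa using this

lemma card_filter_trueCount_eq [DecidableEq ι] (m : ℕ) :
    #{f : ι → Bool | trueCount f = m} = (Fintype.card ι).choose m := by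
  rw [← card_univ, ← card_powersetCard]
  refine card_nbij' (fun f => ({i | f i = true} : Finset ι)) (fun s i => decide (i ∈ s))
    ?_ ?_ ?_ ?_
  · intro f hf
    simpa [trueCount] using (mem_filter.1 (mem_coe.1 hf)).2
  · intro s hs
    rw [mem_coe, mem_filter]
    simpa [trueCount] using (mem_powersetCard.1 (mem_coe.1 hs)).2
  · intro f _; ext i; simp
  · intro s _; ext i; simp

lemma card_embedding_forall_true (k : ℕ) (f : ι → Bool) :
    #{σ : Fin k ↪ ι | ∀ j, f (σ j) = true} = (trueCount f).descFactorial k := by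
  classical
  let e : {σ : Fin k ↪ ι // ∀ j, f (σ j) = true} ≃ (Fin k ↪ {i // f i = true}) :=
    { toFun := fun σ => ⟨fun j => ⟨σ.1 j, σ.2 j⟩,
        fun a b hab => σ.1.injective (congrArg Subtype.val hab)⟩
      invFun := fun τ => ⟨τ.trans (Function.Embedding.subtype _), fun j => (τ j).2⟩
      left_inv := fun σ => rfl
      right_inv := fun τ => rfl }
  rw [← Fintype.card_subtype, Fintype.card_congr e, Fintype.card_embedding_eq,
    Fintype.card_subtype, Fintype.card_fin, trueCount]

end Counting

def allTrueBelow (m k : ℕ) : Set (Fin m → Bool) := {f | ∀ i : Fin m, (i : ℕ) < k → f i = true}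

def trueBelow (m k : ℕ) : Fin m → Bool := fun i => decide ((i : ℕ) < k)

lemma trueCount_trueBelow (m k : ℕ) : trueCount (trueBelow m k) = min m k := by
  simp [trueCount, trueBelow, Fin.card_filter_val_lt]

lemma trueBelow_mem_allTrueBelow (m k : ℕ) : trueBelow m k ∈ allTrueBelow m k := by
  simp [allTrueBelow, trueBelow]

lemma lt_trueCount_of_mem_allTrueBelow {m k : ℕ} (hk : k ≤ m) {f : Fin m → Bool}
    (hf : f ∈ allTrueBelow m k) (hne : f ≠ trueBelow m k) : k < trueCount f := by
  have hsub : ({i | (i : ℕ) < k} : Finset (Fin m)) ⊆ ({i | f i = true} : Finset (Fin m)) := by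
    intro i; simpa using hf i
  have hssub : ({i | (i : ℕ) < k} : Finset (Fin m)) ⊂ ({i | f i = true} : Finset (Fin m)) := by
    refine (ssubset_iff_of_subset hsub).2 ?_
    by_contra! h
    simp only [mem_filter, mem_univ, true_and] at h
    refine hne (funext fun i => ?_)
    by_cases hi : (i : ℕ) < k
    · simp [trueBelow, hi, hf i hi]
    · simpa [trueBelow, hi] using mt (h i) hi
  simpa [trueCount, Fin.card_filter_val_lt, hk] using card_lt_card hssub

lemma allTrueBelow_zero (m : ℕ) : allTrueBelow m 0 = Set.univ := by
  simp [allTrueBelow]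

section Exchangeable

variable {ι ι' α : Type*}

lemma preimage_comp_perm_singleton (π : Equiv.Perm ι) (g : ι → α) :
    (fun f : ι → α => f ∘ π) ⁻¹' {g} = {g ∘ π.symm} := by
  ext f
  simp [Equiv.eq_comp_symm]

variable [MeasurableSpace α]

lemma Exchangeable.map_comp_embedding_eq [Finite ι'] {μ : Measure (ι → α)} (hμ : Exchangeable μ)
    (σ τ : ι' ↪ ι) : μ.map (fun f => f ∘ σ) = μ.map (fun f => f ∘ τ) := by
  obtain ⟨π, hπ⟩ := Equiv.Perm.exists_extending_pair σ τ σ.injective τ.injective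
  have hτ : (fun f : ι → α => f ∘ τ) = (fun f => f ∘ σ) ∘ (fun f => f ∘ π) := by
    funext f j
    simp [hπ]
  rw [hτ, ← Measure.map_map (by fun_prop) (by fun_prop), hμ π]

lemma Exchangeable.map_comp_embedding [Finite ι'] {μ : Measure (ι → α)} (hμ : Exchangeable μ)
    (σ : ι' ↪ ι) : Exchangeable (μ.map (fun f => f ∘ σ)) := by
  intro π
  rw [Measure.map_map (by fun_prop) (by fun_prop)]
  exact hμ.map_comp_embedding_eq (π.toEmbedding.trans σ) σ

lemma Exchangeable.measure_singleton_comp [MeasurableSingletonClass (ι → α)]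
    {μ : Measure (ι → α)} (hμ : Exchangeable μ) (π : Equiv.Perm ι) (f : ι → α) :
    μ {f ∘ π} = μ {f} := by
  conv_rhs => rw [← hμ π.symm]
  rw [Measure.map_apply (by fun_prop) (measurableSet_singleton f),
    preimage_comp_perm_singleton, Equiv.symm_symm]

end Exchangeable

lemma Exchangeable.measure_singleton_eq_trueBelow {m : ℕ} {μ : Measure (Fin m → Bool)}
    (hμ : Exchangeable μ) (f : Fin m → Bool) : μ {f} = μ {trueBelow m (trueCount f)} := by
  have h : trueCount (trueBelow m (trueCount f)) = trueCount f := by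
    simpa [trueCount_trueBelow] using trueCount_le_card f
  obtain ⟨π, hπ⟩ := exists_perm_eq_comp_of_trueCount_eq h
  conv_lhs => rw [hπ]
  exact hμ.measure_singleton_comp π _

theorem Exchangeable.ext_of_measure_allTrueBelow {m : ℕ} {μ₁ μ₂ : Measure (Fin m → Bool)}
    [IsFiniteMeasure μ₁] (h₁ : Exchangeable μ₁) (h₂ : Exchangeable μ₂)
    (h : ∀ k ≤ m, μ₁ (allTrueBelow m k) = μ₂ (allTrueBelow m k)) : μ₁ = μ₂ := by
  classical
  have hsplit : ∀ (μ : Measure (Fin m → Bool)) k, μ (allTrueBelow m k) =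
      μ {trueBelow m k} + ∑ f ∈ (allTrueBelow m k).toFinset.erase (trueBelow m k), μ {f} := by
    intro μ k
    rw [add_sum_erase _ (fun f => μ {f}) (Set.mem_toFinset.2 (trueBelow_mem_allTrueBelow m k)),
      sum_measure_singleton, Set.coe_toFinset]
  have key : ∀ d k, m - k = d → k ≤ m → μ₁ {trueBelow m k} = μ₂ {trueBelow m k} := by
    intro d
    induction d using Nat.strong_induction_on with
    | _ d ih =>
    intro k hd hk
    have hrest : ∑ f ∈ (allTrueBelow m k).toFinset.erase (trueBelow m k), μ₁ {f}
        = ∑ f ∈ (allTrueBelow m k).toFinset.erase (trueBelow m k), μ₂ {f} := by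
      refine sum_congr rfl fun f hf => ?_
      obtain ⟨hne, hfA⟩ := mem_erase.1 hf
      have hlt := lt_trueCount_of_mem_allTrueBelow hk (Set.mem_toFinset.1 hfA) hne
      have hle : trueCount f ≤ m := by simpa using trueCount_le_card f
      rw [h₁.measure_singleton_eq_trueBelow, h₂.measure_singleton_eq_trueBelow]
      exact ih _ (by omega) _ rfl hle
    have hk' := h k hk
    rw [hsplit, hsplit, ← hrest] at hk'
    exact (ENNReal.add_left_inj (ENNReal.sum_ne_top.2 fun _ _ => measure_ne_top _ _)).1 hk'
  refine Measure.ext_iff_singleton.2 fun f => ?_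
  rw [h₁.measure_singleton_eq_trueBelow, h₂.measure_singleton_eq_trueBelow]
  exact key _ _ rfl (by simpa using trueCount_le_card f)

lemma setOf_forall_castLE_eq_allTrueBelow {m k : ℕ} (hk : k ≤ m) :
    {f : Fin m → Bool | ∀ j : Fin k, f (Fin.castLEEmb hk j) = true} = allTrueBelow m k := by
  ext f
  exact ⟨fun h i hi => h ⟨i, hi⟩, fun h j => h _ j.isLt⟩

lemma Exchangeable.measure_forall_embedding_true {l k : ℕ} {ν : Measure (Fin l → Bool)}
    (hν : Exchangeable ν) (hk : k ≤ l) (σ : Fin k ↪ Fin l) :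
    ν {f | ∀ j, f (σ j) = true} = ν (allTrueBelow l k) := by
  have hpre : ∀ τ : Fin k ↪ Fin l,
      {f : Fin l → Bool | ∀ j, f (τ j) = true} = (fun f => f ∘ τ) ⁻¹' {fun _ => true} := by
    intro τ
    ext f
    simp [funext_iff]
  rw [← setOf_forall_castLE_eq_allTrueBelow hk, hpre, hpre,
    ← Measure.map_apply (by fun_prop) (measurableSet_singleton _),
    ← Measure.map_apply (by fun_prop) (measurableSet_singleton _),
    hν.map_comp_embedding_eq]

theorem Exchangeable.lintegral_descFactorial_trueCount {l k : ℕ} {ν : Measure (Fin l → Bool)}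
    (hν : Exchangeable ν) (hk : k ≤ l) :
    ∫⁻ f, ((trueCount f).descFactorial k : ℝ≥0∞) ∂ν = l.descFactorial k * ν (allTrueBelow l k) :=
  calc ∫⁻ f, ((trueCount f).descFactorial k : ℝ≥0∞) ∂ν
      = ∫⁻ f, ∑ σ : Fin k ↪ Fin l, {f | ∀ j, f (σ j) = true}.indicator 1 f ∂ν := by
        refine lintegral_congr fun f => ?_
        simp [Set.indicator_apply, ← card_embedding_forall_true]
    _ = ∑ σ : Fin k ↪ Fin l, ν {f | ∀ j, f (σ j) = true} := by
        rw [lintegral_finsetSum _ fun σ _ => (measurable_of_countable _)]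
        simp [lintegral_indicator_one (Set.toFinite _).measurableSet]
    _ = l.descFactorial k * ν (allTrueBelow l k) := by
        simp [hν.measure_forall_embedding_true hk, Fintype.card_embedding_eq]

theorem Exchangeable.toReal_measure_allTrueBelow {l k : ℕ} {ν : Measure (Fin l → Bool)}
    [IsFiniteMeasure ν] (hν : Exchangeable ν) (hk : k ≤ l) :
    (ν (allTrueBelow l k)).toReal
      = (∑' m : ℕ, ((ν.map trueCount) {m}).toReal * (m.descFactorial k : ℝ))
        / (l.descFactorial k : ℝ) := by
  have hL : (l.descFactorial k : ℝ) ≠ 0 := by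
    exact_mod_cast Nat.descFactorial_eq_zero_iff_lt.not.2 (by omega)
  have h := congrArg ENNReal.toReal (hν.lintegral_descFactorial_trueCount hk)
  have hmap : ∫⁻ f, ((trueCount f).descFactorial k : ℝ≥0∞) ∂ν
      = ∫⁻ m, (m.descFactorial k : ℝ≥0∞) ∂(ν.map trueCount) :=
    (lintegral_map (measurable_of_countable fun m : ℕ => (m.descFactorial k : ℝ≥0∞))
      (measurable_of_countable trueCount)).symm
  rw [hmap, lintegral_countable',
    ENNReal.tsum_toReal_eq fun m => ENNReal.mul_ne_top (ENNReal.natCast_ne_top _)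
      (measure_ne_top _ _)] at h
  simp only [ENNReal.toReal_mul, ENNReal.toReal_natCast] at h
  rw [eq_div_iff hL, mul_comm, ← h]
  exact tsum_congr fun m => mul_comm _ _

lemma map_trueCount_singleton_of_lt {l m : ℕ} (ν : Measure (Fin l → Bool)) (hm : l < m) :
    (ν.map trueCount) {m} = 0 := by
  rw [Measure.map_apply (measurable_of_countable _) (measurableSet_singleton m)]
  refine measure_mono_null (fun f (hf : trueCount f = m) => ?_) measure_empty
  have := trueCount_le_card f
  simp only [Fintype.card_fin] at this
  omega

/-- Draw `N` from `κ`, then place `N` ones uniformly at random among the `l` positions. -/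
noncomputable def urn (κ : Measure ℕ) (l : ℕ) : Measure (Fin l → Bool) :=
  ∑ f, (κ {trueCount f} / l.choose (trueCount f)) • Measure.dirac f

section Urn

variable (κ : Measure ℕ) (l : ℕ)

lemma urn_singleton (g : Fin l → Bool) :
    urn κ l {g} = κ {trueCount g} / l.choose (trueCount g) := by
  simp [urn, Measure.dirac_apply', Pi.single_apply]

lemma exchangeable_urn : Exchangeable (urn κ l) := by
  intro π
  refine Measure.ext_iff_singleton.2 fun g => ?_
  rw [Measure.map_apply (by fun_prop) (measurableSet_singleton g),
    preimage_comp_perm_singleton, urn_singleton, urn_singleton, trueCount_comp_perm]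

variable {κ l}

lemma map_trueCount_urn (hκ : ∀ m, l < m → κ {m} = 0) : (urn κ l).map trueCount = κ := by
  refine Measure.ext_iff_singleton.2 fun m => ?_
  rcases le_or_gt m l with hm | hm
  · rw [Measure.map_apply (measurable_of_countable _) (measurableSet_singleton m)]
    have hpre : trueCount ⁻¹' {m}
        = (({f | trueCount f = m} : Finset (Fin l → Bool)) : Set (Fin l → Bool)) := by
      ext f
      simp
    have hC : (l.choose m : ℝ≥0∞) ≠ 0 := by exact_mod_cast (Nat.choose_pos hm).ne'
    rw [hpre, ← sum_measure_singleton, sum_congr rfl fun f hf => by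
      rw [urn_singleton, (mem_filter.1 hf).2], sum_const, card_filter_trueCount_eq,
      Fintype.card_fin, nsmul_eq_mul, ENNReal.mul_div_cancel hC (ENNReal.natCast_ne_top _)]
  · rw [map_trueCount_singleton_of_lt _ hm, hκ m hm]

lemma isProbabilityMeasure_urn [IsProbabilityMeasure κ] (hκ : ∀ m, l < m → κ {m} = 0) :
    IsProbabilityMeasure (urn κ l) :=
  ⟨by rw [← Set.preimage_univ (f := trueCount),
    ← Measure.map_apply (measurable_of_countable _) MeasurableSet.univ, map_trueCount_urn hκ,
    measure_univ]⟩

end Urn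

lemma map_restrict_allTrueBelow {n l k : ℕ} (hnl : n ≤ l) (hk : k ≤ n)
    (ν : Measure (Fin l → Bool)) :
    ν.map (fun f (i : Fin n) => f (Fin.castLE hnl i)) (allTrueBelow n k)
      = ν (allTrueBelow l k) := by
  rw [Measure.map_apply (measurable_of_countable _) (Set.toFinite _).measurableSet]
  congr 1 with f
  exact ⟨fun h i hi => h ⟨i, by omega⟩ hi, fun h i hi => h _ hi⟩

theorem stmt_0_general (n l : ℕ) (hnl : n ≤ l)
    (μ : Measure (Fin n → Bool)) [IsProbabilityMeasure μ]
    (hexch : ∀ π : Equiv.Perm (Fin n), Measure.map (fun f => f ∘ π) μ = μ) :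
    (∃ ν : Measure (Fin l → Bool), IsProbabilityMeasure ν ∧
        (∀ π : Equiv.Perm (Fin l), Measure.map (fun f => f ∘ π) ν = ν) ∧
        Measure.map (fun f (i : Fin n) => f (Fin.castLE hnl i)) ν = μ)
      ↔ (∃ κ : Measure ℕ, IsProbabilityMeasure κ ∧ (∀ m, l < m → κ {m} = 0) ∧
          ∀ k, 1 ≤ k → k ≤ n →
            (μ {f | ∀ i : Fin n, (i : ℕ) < k → f i = true}).toReal
              = (∑' m : ℕ, (κ {m}).toReal * (m.descFactorial k : ℝ))
                / (l.descFactorial k : ℝ)) := by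
  constructor
  · rintro ⟨ν, hν, hνexch, rfl⟩
    refine ⟨ν.map trueCount,
      Measure.isProbabilityMeasure_map (measurable_of_countable _).aemeasurable,
      fun m hm => map_trueCount_singleton_of_lt ν hm, fun k _ hk => ?_⟩
    rw [← Exchangeable.toReal_measure_allTrueBelow hνexch (hk.trans hnl),
      ← map_restrict_allTrueBelow hnl hk]
    rfl
  · rintro ⟨κ, hκ, hκl, hmom⟩
    have hurn := isProbabilityMeasure_urn hκl
    refine ⟨urn κ l, hurn, exchangeable_urn κ l, ?_⟩
    have hmarg_exch : Exchangeable ((urn κ l).map fun f (i : Fin n) => f (Fin.castLE hnl i)) :=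
      (exchangeable_urn κ l).map_comp_embedding (Fin.castLEEmb hnl)
    refine hmarg_exch.ext_of_measure_allTrueBelow hexch fun k hk => ?_
    rw [map_restrict_allTrueBelow hnl hk]
    rcases Nat.eq_zero_or_pos k with rfl | hk0
    · rw [allTrueBelow_zero, allTrueBelow_zero, measure_univ, measure_univ]
    · have hμk := hmom k hk0 hk
      rw [← map_trueCount_urn hκl,
        ← Exchangeable.toReal_measure_allTrueBelow (exchangeable_urn κ l) (hk.trans hnl)] at hμk
      exact (ENNReal.toReal_eq_toReal_iff' (measure_ne_top _ _) (measure_ne_top _ _)).1 hμk.symm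

theorem stmt_0 (n l : ℕ) (hn : 1 ≤ n) (hnl : n ≤ l)
    (μ : Measure (Fin n → Bool)) [IsProbabilityMeasure μ]
    (hexch : ∀ π : Equiv.Perm (Fin n), Measure.map (fun f => f ∘ π) μ = μ) :
    (∃ ν : Measure (Fin l → Bool), IsProbabilityMeasure ν ∧
        (∀ π : Equiv.Perm (Fin l), Measure.map (fun f => f ∘ π) ν = ν) ∧
        Measure.map (fun f (i : Fin n) => f (Fin.castLE hnl i)) ν = μ)
      ↔ (∃ κ : Measure ℕ, IsProbabilityMeasure κ ∧ (∀ m, l < m → κ {m} = 0) ∧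
          ∀ k, 1 ≤ k → k ≤ n →
            (μ {f | ∀ i : Fin n, (i : ℕ) < k → f i = true}).toReal
              = (∑' m : ℕ, (κ {m}).toReal * (m.descFactorial k : ℝ))
                / (l.descFactorial k : ℝ)) :=
  stmt_0_general n l hnl μ hexch
end

section
/- Let $n \ge 1$ and let $\mu$ be an exchangeable probability measure on $\{0,1\}^n$ (or equivalently $\{\pm 1\}^n$). Let $E_k$ be the event that exactly the first $k$ coordinates equal $1$ and the rest equal $0$. Then $\mu$ extends to an infinite exchangeable sequence whose de Finetti mixing variable $W$ satisfies $W \in (0,1)$ a.s. if and only if there exist a real random variable $\xi$ and $c > 0$ such that $E[e^{(2k-n)\xi}] = c\,\mu(E_k)$ for all $k = 0,1,\dots,n$. -/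
/-!
With `σ` the logistic function, `w = σ(2x) = eˣ / (2 cosh x)` is a bijection `ℝ ≃ (0,1)` under
which `wᵏ (1 - w)ⁿ⁻ᵏ = e^{(2k-n)x} / (2 cosh x)ⁿ`. Hence a mixing law `ρ` on `(0,1)`, transported
to `ℝ` and tilted by `(2 cosh x)⁻ⁿ`, has exponential moments proportional to the moments of `ρ`;
conversely, tilting `ξ` by `(2 cosh x)ⁿ` and transporting back to `(0,1)` gives a mixing law.
The normalising constant of the latter tilt is `∫ (2 cosh x)ⁿ dξ = ∑ₖ C(n,k) c μ(Eₖ) = c`, because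
exchangeability gives each of the `C(n,k)` configurations with `k` ones the mass `μ(Eₖ)`.
-/

open MeasureTheory Finset
open scoped Pointwise

section Exchangeable

variable {ι α : Type*} [MeasurableSpace α]

lemma measure_singleton_comp_perm [Countable ι] [MeasurableSingletonClass α] {μ : Measure (ι → α)}
    (hμ : ∀ π : Equiv.Perm ι, μ.map (fun f => f ∘ π) = μ) (f : ι → α) (π : Equiv.Perm ι) :
    μ {f ∘ π} = μ {f} := by
  have : (fun g : ι → α => g ∘ π.symm) ⁻¹' {f} = {f ∘ π} := by
    ext g
    simp only [Set.mem_preimage, Set.mem_singleton_iff]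
    exact Equiv.comp_symm_eq π f g
  rw [← this, ← Measure.map_apply (by fun_prop) (measurableSet_singleton f), hμ]

lemma measure_indicator_eq_of_card_eq [Countable ι] [DecidableEq ι] {μ : Measure (ι → Bool)}
    (hμ : ∀ π : Equiv.Perm ι, μ.map (fun f => f ∘ π) = μ) {s t : Finset ι} (hst : #s = #t) :
    μ {fun i => decide (i ∈ s)} = μ {fun i => decide (i ∈ t)} := by
  have := Set.powersetCard.isPretransitive (α := ι) (n := #t)
  obtain ⟨π, hπ⟩ := MulAction.exists_smul_eq (Equiv.Perm ι)
    (⟨s, Set.powersetCard.mem_iff.2 hst⟩ : Set.powersetCard ι #t)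
    ⟨t, Set.powersetCard.mem_iff.2 rfl⟩
  have ht : t = π • s := congrArg Subtype.val hπ.symm
  rw [← measure_singleton_comp_perm hμ _ π⁻¹, ht]
  congr
  ext i
  simp only [Function.comp_apply, decide_eq_decide, ← Finset.inv_smul_mem_iff]
  rfl

def firstOnes (n k : ℕ) : Fin n → Bool := fun i => decide ((i : ℕ) < k)

lemma sum_choose_mul_measureReal_firstOnes {n : ℕ} {μ : Measure (Fin n → Bool)}
    [IsProbabilityMeasure μ] (hμ : ∀ π : Equiv.Perm (Fin n), μ.map (fun f => f ∘ π) = μ) :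
    ∑ k ∈ range (n + 1), (n.choose k : ℝ) * μ.real {firstOnes n k} = 1 := by
  have hind : Function.Bijective fun (s : Finset (Fin n)) (i : Fin n) => decide (i ∈ s) := by
    refine ⟨fun s t hst => ?_, fun f => ⟨({i | f i} : Finset (Fin n)), by simp⟩⟩
    ext i
    simpa using congrFun hst i
  have hfirst : ∀ s : Finset (Fin n),
      μ.real {fun i => decide (i ∈ s)} = μ.real {firstOnes n #s} := by
    intro s
    have hs : #s = #{i : Fin n | (i : ℕ) < #s} := by
      rw [Fin.card_filter_val_lt, min_eq_right (card_le_univ s |>.trans_eq (Fintype.card_fin n))]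
    simp only [measureReal_def, measure_indicator_eq_of_card_eq hμ hs, mem_filter_univ]
    rfl
  calc ∑ k ∈ range (n + 1), (n.choose k : ℝ) * μ.real {firstOnes n k}
      = ∑ s ∈ (univ : Finset (Fin n)).powerset, μ.real {fun i => decide (i ∈ s)} := by
        rw [sum_congr rfl fun s _ => hfirst s,
          sum_powerset_apply_card fun k => μ.real {firstOnes n k},
          card_univ, Fintype.card_fin]
        simp only [nsmul_eq_mul]
    _ = ∑ f : Fin n → Bool, μ.real {f} := by
        rw [powerset_univ]
        exact Fintype.sum_bijective _ hind _ _ fun _ => rfl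
    _ = 1 := by simp

end Exchangeable

section LogisticTilt

open Real

lemma two_mul_cosh_eq (x : ℝ) : 2 * cosh x = exp x + exp (-x) := by
  rw [cosh_eq]; ring

lemma sigmoid_two_mul (x : ℝ) : sigmoid (2 * x) = exp x / (2 * cosh x) := by
  have h : exp x + exp (-x) = (1 + exp (-(2 * x))) * exp x := by
    rw [add_mul, one_mul, ← exp_add]; ring_nf
  rw [sigmoid_def, two_mul_cosh_eq, h, div_mul_cancel_right₀ (exp_pos x).ne']

lemma one_sub_sigmoid_two_mul (x : ℝ) : 1 - sigmoid (2 * x) = exp (-x) / (2 * cosh x) := by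
  rw [← sigmoid_neg, ← mul_neg, sigmoid_two_mul, cosh_neg]

/-- `log ∑_{s ∈ {±1}ⁿ} e^{x (s₁ + ⋯ + sₙ)}`, the log-partition function of `n` independent
spins in the field `x`. -/
noncomputable def spinLogPartition (n : ℕ) (x : ℝ) : ℝ := n * log (2 * cosh x)

lemma exp_spinLogPartition (n : ℕ) (x : ℝ) : exp (spinLogPartition n x) = (2 * cosh x) ^ n := by
  rw [spinLogPartition, exp_nat_mul, exp_log (by positivity)]

lemma measurable_spinLogPartition (n : ℕ) : Measurable (spinLogPartition n) := by
  unfold spinLogPartition; fun_prop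

lemma spinLogPartition_nonneg (n : ℕ) (x : ℝ) : 0 ≤ spinLogPartition n x :=
  mul_nonneg n.cast_nonneg (log_nonneg (by nlinarith [one_le_cosh x]))

lemma sigmoid_two_mul_pow_mul_one_sub_pow {k n : ℕ} (hk : k ≤ n) (x : ℝ) :
    sigmoid (2 * x) ^ k * (1 - sigmoid (2 * x)) ^ (n - k)
      = exp ((2 * k - n) * x - spinLogPartition n x) := by
  have hn : n = k + (n - k) := (Nat.add_sub_cancel' hk).symm
  rw [exp_sub, exp_spinLogPartition, one_sub_sigmoid_two_mul, sigmoid_two_mul, div_pow, div_pow,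
    div_mul_div_comm, ← exp_nat_mul, ← exp_nat_mul, ← exp_add, ← pow_add, ← hn]
  congr 2
  push_cast [Nat.cast_sub hk]
  ring

lemma two_mul_cosh_pow (n : ℕ) (x : ℝ) :
    (2 * cosh x) ^ n = ∑ k ∈ range (n + 1), (n.choose k : ℝ) * exp ((2 * k - n) * x) := by
  rw [two_mul_cosh_eq, add_pow]
  refine sum_congr rfl fun k hk => ?_
  rw [← exp_nat_mul, ← exp_nat_mul, ← exp_add,
    Nat.cast_sub (Nat.lt_succ_iff.mp (mem_range.mp hk))]
  ring_nf

lemma sigmoid_log_div_one_sub {w : ℝ} (hw : w ∈ Set.Ioo 0 1) :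
    sigmoid (log (w / (1 - w))) = w := by
  obtain ⟨hw0, hw1⟩ := hw
  rw [sigmoid_def, exp_neg, exp_log (div_pos hw0 (by linarith)), inv_div]
  field_simp
  ring

lemma measurable_half_log_div_one_sub : Measurable fun w : ℝ => log (w / (1 - w)) / 2 := by
  fun_prop

lemma abs_exp_sub_spinLogPartition_le_one {k n : ℕ} (hk : k ≤ n) (x : ℝ) :
    |exp ((2 * k - n) * x - spinLogPartition n x)| ≤ 1 := by
  rw [abs_of_pos (exp_pos _), ← sigmoid_two_mul_pow_mul_one_sub_pow hk]
  have h₀ := sigmoid_nonneg (2 * x)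
  have h₁ := sigmoid_le_one (2 * x)
  exact mul_le_one₀ (pow_le_one₀ h₀ h₁) (pow_nonneg (by linarith) _)
    (pow_le_one₀ (by linarith) (by linarith))

lemma integrable_exp_sub_spinLogPartition {k n : ℕ} (hk : k ≤ n) (ν : Measure ℝ)
    [IsFiniteMeasure ν] :
    Integrable (fun x => exp ((2 * k - n) * x - spinLogPartition n x)) ν :=
  Integrable.of_bound (by have := measurable_spinLogPartition n; fun_prop) 1
    (ae_of_all _ (abs_exp_sub_spinLogPartition_le_one hk))

lemma integral_map_sigmoid_two_mul {k n : ℕ} (hk : k ≤ n) (ν : Measure ℝ) :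
    ∫ w, w ^ k * (1 - w) ^ (n - k) ∂(ν.map fun x => sigmoid (2 * x))
      = ∫ x, exp ((2 * k - n) * x - spinLogPartition n x) ∂ν := by
  rw [integral_map (by fun_prop) (by fun_prop)]
  simp_rw [sigmoid_two_mul_pow_mul_one_sub_pow hk]

lemma map_sigmoid_two_mul_Ioo_compl (ν : Measure ℝ) :
    (ν.map fun x => sigmoid (2 * x)) (Set.Ioo 0 1)ᶜ = 0 := by
  rw [Measure.map_apply (by fun_prop) measurableSet_Ioo.compl]
  convert measure_empty (μ := ν)
  ext x
  simp [sigmoid_pos, sigmoid_lt_one]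

lemma map_sigmoid_two_mul_map_half_log {ρ : Measure ℝ} (hρ : ρ (Set.Ioo 0 1)ᶜ = 0) :
    ((ρ.map fun w => log (w / (1 - w)) / 2).map fun x => sigmoid (2 * x)) = ρ := by
  rw [Measure.map_map (by fun_prop) measurable_half_log_div_one_sub]
  conv_rhs => rw [← Measure.map_id (μ := ρ)]
  refine Measure.map_congr ?_
  filter_upwards [measure_eq_zero_iff_ae_notMem.1 hρ] with w hw
  rw [Set.mem_compl_iff, not_not] at hw
  simp only [Function.comp_apply, id_eq, mul_div_cancel₀ _ (two_ne_zero (α := ℝ)),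
    sigmoid_log_div_one_sub hw]

theorem exists_expMoments_of_mixture {n : ℕ} {m : ℕ → ℝ}
    (ρ : Measure ℝ) [IsProbabilityMeasure ρ] (hρ : ρ (Set.Ioo 0 1)ᶜ = 0)
    (hm : ∀ k ≤ n, m k = ∫ w, w ^ k * (1 - w) ^ (n - k) ∂ρ) :
    ∃ (ξ : Measure ℝ) (c : ℝ), IsProbabilityMeasure ξ ∧ 0 < c ∧ ∀ k ≤ n,
      Integrable (fun x => exp ((2 * (k : ℝ) - n) * x)) ξ ∧
      ∫ x, exp ((2 * (k : ℝ) - n) * x) ∂ξ = c * m k := by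
  set ν := ρ.map fun w => log (w / (1 - w)) / 2
  have : IsProbabilityMeasure ν :=
    Measure.isProbabilityMeasure_map measurable_half_log_div_one_sub.aemeasurable
  have hZ : Integrable (fun x => exp (-spinLogPartition n x)) ν := by
    refine Integrable.of_bound (measurable_spinLogPartition n).neg.exp.aestronglyMeasurable 1
      (ae_of_all _ fun x => ?_)
    rw [norm_of_nonneg (exp_pos _).le, exp_le_one_iff, neg_nonpos]
    exact spinLogPartition_nonneg n x
  refine ⟨ν.tilted fun x => -spinLogPartition n x, (∫ x, exp (-spinLogPartition n x) ∂ν)⁻¹,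
    isProbabilityMeasure_tilted hZ, inv_pos.2 (integral_exp_pos hZ), fun k hk => ⟨?_, ?_⟩⟩
  · rw [integrable_tilted_iff hZ]
    simpa [← exp_add, neg_add_eq_sub] using integrable_exp_sub_spinLogPartition hk ν
  · rw [integral_tilted, hm k hk, ← map_sigmoid_two_mul_map_half_log hρ,
      integral_map_sigmoid_two_mul hk, ← integral_const_mul]
    congr 1 with x
    rw [smul_eq_mul, div_mul_eq_mul_div, exp_sub, ← exp_add, neg_add_eq_sub, exp_sub]
    ring

theorem exists_mixture_of_expMoments {n : ℕ} {m : ℕ → ℝ}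
    (hm : ∑ k ∈ range (n + 1), (n.choose k : ℝ) * m k = 1)
    (ξ : Measure ℝ) [IsProbabilityMeasure ξ] {c : ℝ} (hc : 0 < c)
    (h : ∀ k ≤ n, Integrable (fun x => exp ((2 * (k : ℝ) - n) * x)) ξ ∧
      ∫ x, exp ((2 * (k : ℝ) - n) * x) ∂ξ = c * m k) :
    ∃ ρ : Measure ℝ, IsProbabilityMeasure ρ ∧ ρ (Set.Ioo 0 1)ᶜ = 0 ∧
      ∀ k ≤ n, m k = ∫ w, w ^ k * (1 - w) ^ (n - k) ∂ρ := by
  have hint : ∀ k ∈ range (n + 1),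
      Integrable (fun x => (n.choose k : ℝ) * exp ((2 * (k : ℝ) - n) * x)) ξ :=
    fun k hk => (h k (Nat.lt_succ_iff.mp (mem_range.mp hk))).1.const_mul _
  have hZ : Integrable (fun x => exp (spinLogPartition n x)) ξ := by
    simp_rw [exp_spinLogPartition, two_mul_cosh_pow]
    exact integrable_finsetSum _ hint
  have hZc : ∫ x, exp (spinLogPartition n x) ∂ξ = c := by
    simp_rw [exp_spinLogPartition, two_mul_cosh_pow]
    rw [integral_finsetSum _ hint]
    simp_rw [integral_const_mul]
    rw [← mul_one c, ← hm, mul_sum]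
    exact sum_congr rfl fun k hk => by
      rw [(h k (Nat.lt_succ_iff.mp (mem_range.mp hk))).2]; ring
  set ν := ξ.tilted (spinLogPartition n)
  have : IsProbabilityMeasure ν := isProbabilityMeasure_tilted hZ
  refine ⟨ν.map fun x => sigmoid (2 * x), Measure.isProbabilityMeasure_map (by fun_prop),
    map_sigmoid_two_mul_Ioo_compl ν, fun k hk => ?_⟩
  rw [integral_map_sigmoid_two_mul hk, integral_tilted, hZc]
  simp_rw [smul_eq_mul, div_mul_eq_mul_div, exp_sub, mul_div_cancel₀ _ (exp_pos _).ne']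
  rw [integral_div, (h k hk).2, mul_div_cancel_left₀ _ hc.ne']

end LogisticTilt

theorem stmt_6_general (n : ℕ)
    (μ : Measure (Fin n → Bool)) [IsProbabilityMeasure μ]
    (hexch : ∀ π : Equiv.Perm (Fin n), Measure.map (fun f => f ∘ π) μ = μ)
    (E : ℕ → Set (Fin n → Bool))
    (hE : ∀ k, E k = {f | ∀ i : Fin n, (f i = true ↔ (i : ℕ) < k)}) :
    (∃ ρ : Measure ℝ, IsProbabilityMeasure ρ ∧ ρ (Set.Ioo (0 : ℝ) 1)ᶜ = 0 ∧
        ∀ k ≤ n, (μ (E k)).toReal = ∫ w, w ^ k * (1 - w) ^ (n - k) ∂ρ)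
      ↔ (∃ (ξ : Measure ℝ) (c : ℝ), IsProbabilityMeasure ξ ∧ 0 < c ∧
          ∀ k ≤ n,
            Integrable (fun x => Real.exp ((2 * (k : ℝ) - n) * x)) ξ ∧
            ∫ x, Real.exp ((2 * (k : ℝ) - n) * x) ∂ξ = c * (μ (E k)).toReal) := by
  have hE' : ∀ k, E k = {firstOnes n k} := by
    intro k
    ext f
    simp only [hE, Set.mem_ofPred_eq, Set.mem_singleton_iff, funext_iff, firstOnes]
    exact forall_congr' fun i => by cases f i <;> simp
  have hsum : ∑ k ∈ range (n + 1), (n.choose k : ℝ) * (μ (E k)).toReal = 1 := by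
    simpa only [hE', measureReal_def] using sum_choose_mul_measureReal_firstOnes hexch
  constructor
  · rintro ⟨ρ, _, hρ, hm⟩
    exact exists_expMoments_of_mixture ρ hρ hm
  · rintro ⟨ξ, c, _, hc, h⟩
    exact exists_mixture_of_expMoments hsum ξ hc h

theorem stmt_6 (n : ℕ) (hn : 1 ≤ n)
    (μ : Measure (Fin n → Bool)) [IsProbabilityMeasure μ]
    (hexch : ∀ π : Equiv.Perm (Fin n), Measure.map (fun f => f ∘ π) μ = μ)
    (E : ℕ → Set (Fin n → Bool))
    (hE : ∀ k, E k = {f | ∀ i : Fin n, (f i = true ↔ (i : ℕ) < k)}) :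
    (∃ ρ : Measure ℝ, IsProbabilityMeasure ρ ∧ ρ (Set.Ioo (0 : ℝ) 1)ᶜ = 0 ∧
        ∀ k ≤ n, (μ (E k)).toReal = ∫ w, w ^ k * (1 - w) ^ (n - k) ∂ρ)
      ↔ (∃ (ξ : Measure ℝ) (c : ℝ), IsProbabilityMeasure ξ ∧ 0 < c ∧
          ∀ k ≤ n,
            Integrable (fun x => Real.exp ((2 * (k : ℝ) - n) * x)) ξ ∧
            ∫ x, Real.exp ((2 * (k : ℝ) - n) * x) ∂ξ = c * (μ (E k)).toReal) :=
  stmt_6_general n μ hexch E hE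
end

section
/- Let $b < 1$, $a > 0$, integers $0 \le k$, $n = 2k$ or more generally $2k \le n$, and set $u_j = a^j b^{j(n-j)}$ for $0 \le j \le n$. Then the determinant of the $(k+1)\times(k+1)$ Hankel matrix $(u_{n-2k+i+j})_{0 \le i,j \le k}$ equals $a^{(k+1)(n-k)} b^{k(k+1)(3n-2k-1)/3} \prod_{0 \le j < l \le k} (b^{-2l} - b^{-2j})$, and in particular it is strictly positive. -/
open Finset

private lemma zprod {ι : Type*} (b : ℝ) (hb : b ≠ 0) (s : Finset ι) (f : ι → ℤ) :
    ∏ i ∈ s, b ^ f i = b ^ (∑ i ∈ s, f i) := by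
  classical
  induction s using Finset.cons_induction with
  | empty => simp
  | cons a s ha ih => rw [Finset.prod_cons, Finset.sum_cons, zpow_add₀ hb, ih]

private lemma aux_sum (A B : ℤ) : ∀ N : ℕ,
    6 * ∑ i ∈ Finset.range N, (A + B * i - 2 * (i : ℤ) ^ 2)
      = 6 * A * N + 3 * B * N * (N - 1) - 2 * N * (N - 1) * (2 * N - 1)
  | 0 => by simp
  | (N + 1) => by
    rw [Finset.sum_range_succ, mul_add, aux_sum A B N]
    push_cast
    ring

theorem stmt_7 (a b : ℝ) (ha : 0 < a) (hb0 : 0 < b) (hb : b < 1)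
    (n k : ℕ) (hkn : 2 * k ≤ n)
    (u : ℕ → ℝ) (hu : ∀ j, u j = a ^ j * b ^ (j * (n - j))) :
    (Matrix.of fun i j : Fin (k + 1) =>
        u (n - 2 * k + (i : ℕ) + (j : ℕ))).det
      = a ^ ((k + 1) * (n - k)) * b ^ (k * (k + 1) * (3 * n - 2 * k - 1) / 3) *
        ∏ l ∈ Finset.range (k + 1), ∏ j ∈ Finset.range l,
          (b ^ (-(2 * (l : ℤ))) - b ^ (-(2 * (j : ℤ)))) ∧
    0 < (Matrix.of fun i j : Fin (k + 1) =>
        u (n - 2 * k + (i : ℕ) + (j : ℕ))).det := by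
  have hb' : b ≠ 0 := hb0.ne'
  set m := n - 2 * k with hm
  set v : Fin (k + 1) → ℝ := fun i => b ^ (-(2 * ((i : ℕ) : ℤ)))
  set r : Fin (k + 1) → ℝ := fun i =>
    a ^ (m + (i : ℕ)) * b ^ ((((m : ℤ) + (i : ℕ)) * (2 * k - (i : ℕ))))
  set c : Fin (k + 1) → ℝ := fun j =>
    a ^ ((j : ℕ)) * b ^ ((((j : ℕ) : ℤ) * (2 * k - (j : ℕ)) - (m : ℤ) * (j : ℕ)))
  -- the entrywise factorization
  have hentry : ∀ i j : Fin (k + 1),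
      u (m + (i : ℕ) + (j : ℕ)) = r i * (c j * Matrix.vandermonde v i j) := by
    intro i j
    have hi : (i : ℕ) ≤ k := Nat.lt_succ_iff.mp i.isLt
    have hj : (j : ℕ) ≤ k := Nat.lt_succ_iff.mp j.isLt
    have hij : (i : ℕ) + (j : ℕ) ≤ 2 * k := by omega
    rw [hu]
    have h2 : n - (m + (i : ℕ) + (j : ℕ)) = 2 * k - ((i : ℕ) + (j : ℕ)) := by omega
    have hbpow : b ^ ((m + (i : ℕ) + (j : ℕ)) * (n - (m + (i : ℕ) + (j : ℕ))))
        = b ^ ((((m + (i : ℕ) + (j : ℕ)) * (n - (m + (i : ℕ) + (j : ℕ))) : ℕ) : ℤ)) :=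
      (zpow_natCast b _).symm
    have hcast : (((m + (i : ℕ) + (j : ℕ)) * (n - (m + (i : ℕ) + (j : ℕ))) : ℕ) : ℤ)
        = ((m : ℤ) + (i : ℕ)) * (2 * k - (i : ℕ))
          + (((j : ℕ) : ℤ) * (2 * k - (j : ℕ)) - (m : ℤ) * (j : ℕ))
          + (-(2 * ((i : ℕ) : ℤ)) * (j : ℕ)) := by
      rw [h2, Nat.cast_mul, Nat.cast_sub hij]
      push_cast
      ring
    have hv : Matrix.vandermonde v i j = b ^ ((-(2 * ((i : ℕ) : ℤ))) * ((j : ℕ) : ℤ)) := by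
      rw [Matrix.vandermonde_apply]
      show (b ^ (-(2 * ((i : ℕ) : ℤ)))) ^ ((j : ℕ)) = _
      rw [← zpow_natCast (b ^ (-(2 * ((i : ℕ) : ℤ)))) (j : ℕ), ← zpow_mul]
    rw [hbpow, hcast, zpow_add₀ hb', zpow_add₀ hb', hv]
    show a ^ (m + (i : ℕ) + (j : ℕ)) * _ = _
    rw [pow_add a (m + (i : ℕ)) (j : ℕ)]
    simp only [r, c]
    ring
  -- rewrite the matrix
  have hM : (Matrix.of fun i j : Fin (k + 1) => u (m + (i : ℕ) + (j : ℕ)))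
      = Matrix.of fun i j =>
          r i * (Matrix.of (fun i j : Fin (k + 1) => c j * Matrix.vandermonde v i j)) i j := by
    ext i j
    simpa using hentry i j
  have hdet : (Matrix.of fun i j : Fin (k + 1) => u (m + (i : ℕ) + (j : ℕ))).det
      = (∏ i, r i) * ((∏ j, c j) * (Matrix.vandermonde v).det) := by
    rw [hM, Matrix.det_mul_column, Matrix.det_mul_row]
  -- the vandermonde determinant as the double product
  have hvdm : (Matrix.vandermonde v).det
      = ∏ l ∈ Finset.range (k + 1), ∏ j ∈ Finset.range l,
          (b ^ (-(2 * (l : ℤ))) - b ^ (-(2 * (j : ℤ)))) := by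
    rw [Matrix.det_vandermonde]
    rw [Finset.prod_comm' (t' := (univ : Finset (Fin (k + 1)))) (s' := fun j => Finset.Iio j)
      (fun x y => by simp [Finset.mem_Ioi, Finset.mem_Iio, and_comm])]
    rw [← Fin.prod_univ_eq_prod_range
      (fun l => ∏ j ∈ Finset.range l, (b ^ (-(2 * (l : ℤ))) - b ^ (-(2 * (j : ℤ))))) (k + 1)]
    refine Finset.prod_congr rfl fun l _ => ?_
    have : ∏ i ∈ Finset.Iio l, (v l - v i)
        = ∏ x ∈ (Finset.Iio l).map Fin.valEmbedding,
            (b ^ (-(2 * ((l : ℕ) : ℤ))) - b ^ (-(2 * (x : ℤ)))) := by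
      rw [Finset.prod_map]
      rfl
    rw [this, Fin.map_valEmbedding_Iio, Nat.Iio_eq_range]
  -- product of the row factors and column factors
  have hr : ∏ i, r i
      = a ^ (∑ i ∈ Finset.range (k + 1), (m + i))
        * b ^ (∑ i ∈ Finset.range (k + 1), (((m : ℤ) + i) * (2 * k - i))) := by
    rw [show (∏ i, r i) = ∏ i ∈ Finset.range (k + 1),
        (a ^ (m + i) * b ^ (((m : ℤ) + i) * (2 * k - i))) from
      Fin.prod_univ_eq_prod_range (fun i => a ^ (m + i) * b ^ (((m : ℤ) + i) * (2 * k - i))) (k + 1)]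
    rw [Finset.prod_mul_distrib, Finset.prod_pow_eq_pow_sum, zprod b hb']
  have hc : ∏ j, c j
      = a ^ (∑ j ∈ Finset.range (k + 1), j)
        * b ^ (∑ j ∈ Finset.range (k + 1), ((j : ℤ) * (2 * k - j) - (m : ℤ) * j)) := by
    rw [show (∏ j, c j) = ∏ j ∈ Finset.range (k + 1),
        (a ^ j * b ^ ((j : ℤ) * (2 * k - j) - (m : ℤ) * j)) from
      Fin.prod_univ_eq_prod_range
        (fun j => a ^ j * b ^ ((j : ℤ) * (2 * k - j) - (m : ℤ) * j)) (k + 1)]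
    rw [Finset.prod_mul_distrib, Finset.prod_pow_eq_pow_sum, zprod b hb']
  -- exponent arithmetic
  have hSa : (∑ i ∈ Finset.range (k + 1), (m + i)) + (∑ j ∈ Finset.range (k + 1), j)
      = (k + 1) * (n - k) := by
    have hs : (∑ i ∈ Finset.range (k + 1), i) * 2 = (k + 1) * k :=
      Finset.sum_range_id_mul_two (k + 1)
    rw [Finset.sum_add_distrib, Finset.sum_const, Finset.card_range, smul_eq_mul,
      show n - k = m + k by omega]
    zify at hs ⊢
    linear_combination hs
  have hSb : (∑ i ∈ Finset.range (k + 1), (((m : ℤ) + i) * (2 * k - i)))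
        + (∑ j ∈ Finset.range (k + 1), ((j : ℤ) * (2 * k - j) - (m : ℤ) * j))
      = ((k * (k + 1) * (3 * n - 2 * k - 1) / 3 : ℕ) : ℤ) := by
    rw [← Finset.sum_add_distrib]
    have hcongr : ∑ i ∈ Finset.range (k + 1),
          ((((m : ℤ) + i) * (2 * k - i)) + ((i : ℤ) * (2 * k - i) - (m : ℤ) * i))
        = ∑ i ∈ Finset.range (k + 1),
          ((2 * (k : ℤ) * m) + (4 * (k : ℤ) - 2 * m) * i - 2 * (i : ℤ) ^ 2) :=
      Finset.sum_congr rfl fun i _ => by ring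
    rw [hcongr]
    have h6 := aux_sum (2 * (k : ℤ) * m) (4 * (k : ℤ) - 2 * m) (k + 1)
    have hdvd : 3 ∣ k * (k + 1) * (3 * n - 2 * k - 1) := by
      have h3 : k % 3 = 0 ∨ k % 3 = 1 ∨ k % 3 = 2 := by omega
      rcases h3 with h | h | h
      · exact Dvd.dvd.mul_right (Dvd.dvd.mul_right (by omega) _) _
      · exact Dvd.dvd.mul_left (by omega : (3:ℕ) ∣ (3 * n - 2 * k - 1)) _
      · exact Dvd.dvd.mul_right (Dvd.dvd.mul_left (by omega : (3:ℕ) ∣ (k+1)) _) _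
    have hE3 : ((k * (k + 1) * (3 * n - 2 * k - 1) / 3 : ℕ) : ℤ) * 3
        = ((k * (k + 1) * (3 * n - 2 * k - 1) : ℕ) : ℤ) := by
      exact_mod_cast Nat.div_mul_cancel hdvd
    have hC : ((k * (k + 1) * (3 * n - 2 * k - 1) : ℕ) : ℤ)
        = (k : ℤ) * (k + 1) * (3 * (m : ℤ) + 4 * k - 1) := by
      rcases Nat.eq_zero_or_pos k with hk0 | hk0
      · subst hk0; simp
      · have h1 : 2 * k + 1 ≤ 3 * n := by omega
        rw [show 3 * n - 2 * k - 1 = 3 * n - (2 * k + 1) by omega, Nat.cast_mul,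
          Nat.cast_sub h1]
        push_cast
        have hnm : (n : ℤ) = (m : ℤ) + 2 * k := by omega
        rw [hnm]; ring
    push_cast at h6
    have h66 : 6 * ∑ i ∈ Finset.range (k + 1),
          ((2 * (k : ℤ) * m) + (4 * (k : ℤ) - 2 * m) * i - 2 * (i : ℤ) ^ 2)
        = 6 * ((k * (k + 1) * (3 * n - 2 * k - 1) / 3 : ℕ) : ℤ) := by
      linear_combination h6 - 2 * hE3 - 2 * hC
    linarith [h66]
  -- assemble the equality
  have heq : (Matrix.of fun i j : Fin (k + 1) => u (m + (i : ℕ) + (j : ℕ))).det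
      = a ^ ((k + 1) * (n - k)) * b ^ (k * (k + 1) * (3 * n - 2 * k - 1) / 3) *
        ∏ l ∈ Finset.range (k + 1), ∏ j ∈ Finset.range l,
          (b ^ (-(2 * (l : ℤ))) - b ^ (-(2 * (j : ℤ)))) := by
    rw [hdet, hvdm, hr, hc]
    rw [show b ^ (k * (k + 1) * (3 * n - 2 * k - 1) / 3)
        = b ^ (((k * (k + 1) * (3 * n - 2 * k - 1) / 3 : ℕ) : ℤ)) from (zpow_natCast b _).symm]
    rw [← hSa, ← hSb, pow_add, zpow_add₀ hb']
    ring
  refine ⟨heq, ?_⟩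
  rw [heq]
  have hprodpos : (0 : ℝ) < ∏ l ∈ Finset.range (k + 1), ∏ j ∈ Finset.range l,
      (b ^ (-(2 * (l : ℤ))) - b ^ (-(2 * (j : ℤ)))) := by
    refine Finset.prod_pos fun l _ => Finset.prod_pos fun j hj => ?_
    have hjl : j < l := Finset.mem_range.mp hj
    have : b ^ (-(2 * (l : ℤ))) > b ^ (-(2 * (j : ℤ))) := by
      apply zpow_lt_zpow_right_of_lt_one₀ hb0 hb
      omega
    linarith
  exact mul_pos (mul_pos (pow_pos ha _) (pow_pos hb0 _)) hprodpos
end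

section
/- Let $\mu$ be an exchangeable probability measure on $\{0,1\}^n$, $u_k = \mu(\{X_1=\cdots=X_k=1, X_{k+1}=\cdots=X_n=0\})$, $v_k = \sum_{j=0}^{n-k}\binom{n-k}{j} u_{k+j}$, and define $f(k,l) = \sum_{j=0}^k \binom{k}{j} u_{l-j}$ for $0 \le k \le l \le n$ (so $v_{n-k} = f(k,n)$). Then for every $0 \le k$ with $2k \le n$, the determinant of the $(k+1)\times(k+1)$ matrix $(v_{n-2k+i+j})_{0\le i,j\le k}$ equals the determinant of the $(k+1)\times(k+1)$ matrix $(u_{n-2k+i+j})_{0\le i,j\le k}$. -/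
/-!
Reversing the order of rows and columns (`i ↦ k - i`) turns the matrix of `u` into the Hankel
matrix `(w (i + j))` of `w s = u (n - s)`, and the matrix of `v` into the Hankel matrix of the
binomial transform `s ↦ ∑ t, C(s, t) w t` of `w`. By Vandermonde's identity the Hankel matrix of a
binomial transform of `w` is `P H Pᵀ`, where `H` is the Hankel matrix of `w` and `P = (C(i, j))` is
the lower unitriangular Pascal matrix, so the two determinants agree.
-/

open MeasureTheory Finset

section Sequences

variable {R : Type*} [CommSemiring R]

def seqShift : Module.End R (ℕ → R) := LinearMap.funLeft R R Nat.succ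

lemma seqShift_pow_apply (t : ℕ) (w : ℕ → R) (s : ℕ) : (seqShift ^ t) w s = w (s + t) := by
  induction t generalizing s with
  | zero => rfl
  | succ t ih =>
    rw [pow_succ', Module.End.mul_apply]
    exact (ih (s + 1)).trans (congrArg w (by omega))

lemma one_add_seqShift_pow_apply (p : ℕ) (w : ℕ → R) (s : ℕ) :
    ((1 + seqShift) ^ p) w s = ∑ t ∈ range (p + 1), (p.choose t : R) * w (s + t) := by
  rw [add_comm, (Commute.one_right seqShift).add_pow]
  simp [Finset.sum_apply, seqShift_pow_apply, Module.End.natCast_apply, mul_comm]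

def binomialTransform (w : ℕ → R) (s : ℕ) : R :=
  ∑ t ∈ range (s + 1), (s.choose t : R) * w t

/-- Vandermonde's identity, read off from `(1 + E) ^ (p + q) = (1 + E) ^ p * (1 + E) ^ q` for the
shift operator `E`. -/
lemma binomialTransform_add (w : ℕ → R) (p q : ℕ) :
    binomialTransform w (p + q) = ∑ c ∈ range (p + 1), (p.choose c : R) *
      ∑ d ∈ range (q + 1), (q.choose d : R) * w (c + d) := by
  have h := congr_fun (congr_arg (· w) (pow_add (1 + seqShift : Module.End R (ℕ → R)) p q)) 0
  simp only [Module.End.mul_apply, one_add_seqShift_pow_apply, zero_add] at h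
  exact h

lemma binomialTransform_reflect (g : ℕ → R) {n a : ℕ} (ha : a ≤ n) :
    binomialTransform (fun s => g (n - s)) a
      = ∑ j ∈ range (a + 1), (a.choose j : R) * g (n - a + j) := by
  rw [binomialTransform, ← sum_range_reflect]
  refine sum_congr rfl fun j hj => ?_
  have hj : j ≤ a := Nat.lt_succ_iff.1 (mem_range.1 hj)
  rw [add_tsub_cancel_right, Nat.choose_symm hj]
  congr 2
  omega

lemma sum_fin_choose_mul_eq_sum_range {N p : ℕ} (hp : p < N) (f : ℕ → R) :
    ∑ c : Fin N, (p.choose c : R) * f c = ∑ c ∈ range (p + 1), (p.choose c : R) * f c := by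
  rw [Fin.sum_univ_eq_sum_range (fun c => (p.choose c : R) * f c)]
  refine (sum_subset (range_subset_range.2 hp) fun c _ hc => ?_).symm
  rw [Nat.choose_eq_zero_of_lt (by simpa using hc), Nat.cast_zero, zero_mul]

end Sequences

namespace Matrix

variable {R : Type*} [CommRing R]

def pascal (N : ℕ) : Matrix (Fin N) (Fin N) R := of fun i j => ((i : ℕ).choose j : R)

def hankel (w : ℕ → R) (N : ℕ) : Matrix (Fin N) (Fin N) R := of fun i j => w (i + j)

lemma det_pascal (N : ℕ) : (pascal N : Matrix (Fin N) (Fin N) R).det = 1 := by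
  rw [det_of_isLowerTriangular _ fun i j hij => ?_]
  · simp [pascal]
  · simp [pascal, Nat.choose_eq_zero_of_lt (show (i : ℕ) < j from hij)]

lemma hankel_binomialTransform (w : ℕ → R) (N : ℕ) :
    hankel (binomialTransform w) N = pascal N * hankel w N * (pascal N)ᵀ := by
  ext i j
  rw [Matrix.mul_assoc]
  simp only [mul_apply, transpose_apply, hankel, pascal, of_apply]
  have inner (c : ℕ) : ∑ d : Fin N, w (c + d) * ((j : ℕ).choose d : R)
      = ∑ d ∈ range (j + 1), ((j : ℕ).choose d : R) * w (c + d) := by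
    simp_rw [mul_comm (w _)]
    exact sum_fin_choose_mul_eq_sum_range j.isLt (fun d => w (c + d))
  simp_rw [inner, binomialTransform_add]
  exact (sum_fin_choose_mul_eq_sum_range (R := R) i.isLt _).symm

lemma det_hankel_binomialTransform (w : ℕ → R) (N : ℕ) :
    (hankel (binomialTransform w) N).det = (hankel w N).det := by
  rw [hankel_binomialTransform, det_mul, det_mul, det_transpose, det_pascal, one_mul, mul_one]

lemma det_of_sub_add_add_eq_det_hankel (g : ℕ → R) {n k : ℕ} (hk : 2 * k ≤ n) :
    (of fun i j : Fin (k + 1) => g (n - 2 * k + i + j)).det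
      = (hankel (fun a => g (n - a)) (k + 1)).det := by
  rw [← det_submatrix_equiv_self Fin.revPerm]
  congr 1
  ext i j
  simp only [of_apply, submatrix_apply, hankel, Fin.revPerm_apply, Fin.val_rev]
  congr 1
  omega

end Matrix

theorem stmt_8_general (n : ℕ)
    (u v : ℕ → ℝ)
    (hv : ∀ k ≤ n, v k = ∑ j ∈ Finset.range (n - k + 1), ((n - k).choose j : ℝ) * u (k + j))
    (k : ℕ) (hkn : 2 * k ≤ n) :
    (Matrix.of fun i j : Fin (k + 1) =>
        v (n - 2 * k + (i : ℕ) + (j : ℕ))).det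
      = (Matrix.of fun i j : Fin (k + 1) =>
        u (n - 2 * k + (i : ℕ) + (j : ℕ))).det := by
  have hv_reflect (a : ℕ) (ha : a ≤ n) :
      v (n - a) = binomialTransform (fun s => u (n - s)) a := by
    rw [hv _ (Nat.sub_le n a), Nat.sub_sub_self ha, binomialTransform_reflect u ha]
  rw [Matrix.det_of_sub_add_add_eq_det_hankel v hkn, Matrix.det_of_sub_add_add_eq_det_hankel u hkn,
    ← Matrix.det_hankel_binomialTransform (fun s => u (n - s))]
  congr 1
  ext i j
  exact hv_reflect _ (by omega)

theorem stmt_8 (n : ℕ) (hn : 1 ≤ n)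
    (μ : Measure (Fin n → Bool)) [IsProbabilityMeasure μ]
    (hexch : ∀ π : Equiv.Perm (Fin n), Measure.map (fun f => f ∘ π) μ = μ)
    (u v : ℕ → ℝ)
    (hu : ∀ k, u k = (μ {f | ∀ i : Fin n, (f i = true ↔ (i : ℕ) < k)}).toReal)
    (hv : ∀ k ≤ n, v k = ∑ j ∈ Finset.range (n - k + 1), ((n - k).choose j : ℝ) * u (k + j))
    (k : ℕ) (hkn : 2 * k ≤ n) :
    (Matrix.of fun i j : Fin (k + 1) =>
        v (n - 2 * k + (i : ℕ) + (j : ℕ))).det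
      = (Matrix.of fun i j : Fin (k + 1) =>
        u (n - 2 * k + (i : ℕ) + (j : ℕ))).det :=
  stmt_8_general n u v hv k hkn
end

section
/- Let $l \ge n \ge 1$ and let $P$ be a polynomial of degree at most $n$ with real coefficients that is nonnegative at every point of $\{0,1,\dots,l\}$. Then $P$ is an extreme point of the convex cone of such polynomials if and only if $P$ has degree exactly $n$ and all $n$ roots of $P$ are simple and contained in $\{0,1,\dots,l\}$. -/
/-!
Both directions rest on the fact that a polynomial of degree at most `n` vanishing at `n + 1`
points is zero. If `P` has `n` simple roots on the grid `{0, …, l}` and `P = P₁ + P₂`, each `Pₖ`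
vanishes at these roots, so after subtracting the multiple of `P` that agrees with it at one
further grid point it has `n + 1` roots. Conversely, if an extreme `P` had fewer than `n` grid
zeros, the product `Q` of `X - i` over those zeros and one grid point `a` where `P(a) > 0`
has degree at most `n`, and `P = (P + εQ)/2 + (P - εQ)/2` is a splitting into nonnegative parts
for small `ε > 0` that are not multiples of `P`. Having `n` grid zeros, `P` has no other roots.
-/

open Polynomial Filter Topology Finset

lemma exists_pos_forall_abs_mul_le {ι : Type*} (s : Finset ι) (f g : ι → ℝ)
    (hf : ∀ i ∈ s, 0 ≤ f i) (hg : ∀ i ∈ s, f i = 0 → g i = 0) :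
    ∃ ε > 0, ∀ i ∈ s, |ε * g i| ≤ f i := by
  have hev : ∀ᶠ ε in 𝓝[>] (0 : ℝ), ∀ i ∈ s, |ε * g i| ≤ f i := by
    rw [eventually_all_finset]
    intro i hi
    rcases (hf i hi).eq_or_lt with h0 | hpos
    · simp [hg i hi h0.symm, ← h0]
    · have hlim : Tendsto (fun ε : ℝ => |ε * g i|) (𝓝[>] 0) (𝓝 0) := by
        simpa using ((continuous_id.mul continuous_const).abs.tendsto (0 : ℝ)).mono_left
          nhdsWithin_le_nhds
      exact hlim.eventually (eventually_le_nhds hpos)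
  obtain ⟨ε, hε, hεpos⟩ := (hev.and self_mem_nhdsWithin).exists
  exact ⟨ε, hεpos, hε⟩

lemma Polynomial.eq_smul_of_eval_eq_zero {K : Type*} [Field K] {p q : K[X]} {s : Finset K}
    {x : K} (hp : p.natDegree ≤ #s) (hq : q.natDegree ≤ #s) (hps : ∀ y ∈ s, p.eval y = 0)
    (hqs : ∀ y ∈ s, q.eval y = 0) (hx : x ∉ s) (hpx : p.eval x ≠ 0) :
    q = (q.eval x / p.eval x) • p := by
  classical
  refine eq_of_natDegree_lt_card_of_eval_eq' _ _ (insert x s) (fun y hy => ?_) ?_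
  · rcases mem_insert.1 hy with rfl | hy
    · simp [hpx]
    · simp [hps y hy, hqs y hy]
  · rw [card_insert_of_notMem hx]
    exact max_lt (by omega) ((natDegree_smul_le _ _).trans_lt (by omega))

section GridCone

variable {n l : ℕ} {P : ℝ[X]}

variable (n l) in
def IsExtremeOnGrid (P : ℝ[X]) : Prop :=
  ∀ P₁ P₂ : ℝ[X], P₁.natDegree ≤ n → P₂.natDegree ≤ n →
    (∀ i ≤ l, 0 ≤ P₁.eval (i : ℝ)) → (∀ i ≤ l, 0 ≤ P₂.eval (i : ℝ)) →
    P = P₁ + P₂ → ∃ c₁ c₂ : ℝ, 0 ≤ c₁ ∧ 0 ≤ c₂ ∧ P₁ = c₁ • P ∧ P₂ = c₂ • P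

variable (l) in
noncomputable def gridZeros (P : ℝ[X]) : Finset ℕ :=
  (range (l + 1)).filter fun i => P.eval (i : ℝ) = 0

/-- Perturbing `P` by a small multiple `±εQ` keeps it nonnegative on the grid, so an extreme `P`
can only absorb such a `Q` as a multiple of itself. -/
lemma IsExtremeOnGrid.exists_eq_smul (hext : IsExtremeOnGrid n l P) (hdeg : P.natDegree ≤ n)
    (hpos : ∀ i ≤ l, 0 ≤ P.eval (i : ℝ)) {Q : ℝ[X]} (hQ : Q.natDegree ≤ n)
    (hQZ : ∀ i ≤ l, P.eval (i : ℝ) = 0 → Q.eval (i : ℝ) = 0) : ∃ c : ℝ, Q = c • P := by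
  obtain ⟨ε, hε, hεQ⟩ := exists_pos_forall_abs_mul_le (range (l + 1))
    (fun i => P.eval (i : ℝ)) (fun i => Q.eval (i : ℝ))
    (fun i hi => hpos i (mem_range_succ_iff.1 hi)) (fun i hi => hQZ i (mem_range_succ_iff.1 hi))
  have hdeg' (c : ℝ) : ((1 / 2 : ℝ) • P + c • Q).natDegree ≤ n :=
    (natDegree_add_le _ _).trans
      (max_le ((natDegree_smul_le _ _).trans hdeg) ((natDegree_smul_le _ _).trans hQ))
  have hbound (i : ℕ) (hi : i ≤ l) := abs_le.1 (hεQ i (mem_range_succ_iff.2 hi))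
  obtain ⟨c, -, -, -, hc, -⟩ := hext _ _ (hdeg' (ε / 2)) (hdeg' (-(ε / 2)))
    (fun i hi => by simp only [eval_add, eval_smul, smul_eq_mul]; linarith [hbound i hi])
    (fun i hi => by simp only [eval_add, eval_smul, smul_eq_mul]; linarith [hbound i hi])
    (by module)
  have hεQ : ε • Q = (2 * c - 1) • P := by linear_combination (norm := module) 2 • hc
  exact ⟨(2 * c - 1) / ε, by rw [div_eq_inv_mul, mul_smul, ← hεQ, inv_smul_smul₀ hε.ne']⟩

lemma IsExtremeOnGrid.le_card_gridZeros (hnl : n ≤ l) (hext : IsExtremeOnGrid n l P)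
    (hdeg : P.natDegree ≤ n) (hpos : ∀ i ≤ l, 0 ≤ P.eval (i : ℝ)) :
    n ≤ #(gridZeros l P) := by
  by_contra! hlt
  obtain ⟨a, ha, haZ⟩ : ∃ a ∈ range (l + 1), a ∉ gridZeros l P :=
    exists_mem_notMem_of_card_lt_card (by rw [card_range]; omega)
  have hPa : P.eval (a : ℝ) ≠ 0 := fun h => haZ (mem_filter.2 ⟨ha, h⟩)
  set Q := ∏ i ∈ insert a (gridZeros l P), (X - C (i : ℝ))
  have hQ : ∀ i ∈ insert a (gridZeros l P), Q.eval (i : ℝ) = 0 := fun i hi => by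
    rw [eval_prod]; exact prod_eq_zero hi (by simp)
  obtain ⟨c, hc⟩ := hext.exists_eq_smul hdeg hpos (Q := Q)
    (by rw [natDegree_finsetProd_X_sub_C_eq_card, card_insert_of_notMem haZ]; omega)
    (fun i hi hPi => hQ i (mem_insert_of_mem (mem_filter.2 ⟨mem_range_succ_iff.2 hi, hPi⟩)))
  have hc0 : c = 0 := by
    simpa [hPa, hQ a (mem_insert_self _ _)] using congrArg (eval (a : ℝ)) hc
  have hQ0 : Q ≠ 0 := (monic_prod_of_monic _ _ fun (i : ℕ) _ => monic_X_sub_C (i : ℝ)).ne_zero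
  exact hQ0 (by rw [hc, hc0, zero_smul])

lemma IsExtremeOnGrid.roots_eq_gridZeros (hnl : n ≤ l) (hext : IsExtremeOnGrid n l P)
    (hP0 : P ≠ 0) (hdeg : P.natDegree ≤ n) (hpos : ∀ i ≤ l, 0 ≤ P.eval (i : ℝ)) :
    #(gridZeros l P) = n ∧ P.natDegree = n ∧
      P.roots = Multiset.map (fun i : ℕ => (i : ℝ)) (gridZeros l P).val := by
  set Z := (gridZeros l P).map (Nat.castEmbedding (R := ℝ))
  have hZ : ∀ x ∈ Z, P.eval x = 0 := by
    simp only [Z, Finset.mem_map, gridZeros, mem_filter]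
    rintro _ ⟨i, ⟨-, hi⟩, rfl⟩
    exact hi
  have hZdeg : #Z ≤ P.natDegree :=
    card_le_degree_of_subset_roots fun x hx => (mem_roots hP0).2 (hZ x hx)
  have hnZ := hext.le_card_gridZeros hnl hdeg hpos
  rw [card_map] at hZdeg
  refine ⟨by omega, by omega, ?_⟩
  rw [roots_eq_of_natDegree_le_card_of_ne_zero hZ (by rw [card_map]; omega) hP0, map_val]
  rfl

lemma isExtremeOnGrid_of_roots_eq (hnl : n ≤ l) (hP0 : P ≠ 0) (hPn : P.natDegree = n)
    {S : Finset ℕ} (hS : S ⊆ range (l + 1)) (hSn : #S = n)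
    (hroots : P.roots = Multiset.map (fun i : ℕ => (i : ℝ)) S.val) :
    IsExtremeOnGrid n l P := by
  intro P₁ P₂ hd₁ hd₂ hpos₁ hpos₂ hsum
  set T := S.map (Nat.castEmbedding (R := ℝ))
  have hT : T.val = P.roots := by rw [hroots, map_val]; rfl
  have hTn : #T = n := by rw [card_map, hSn]
  obtain ⟨j, hj, hjS⟩ : ∃ j ∈ range (l + 1), j ∉ S :=
    exists_mem_notMem_of_card_lt_card (by rw [card_range]; omega)
  have hjl : j ≤ l := mem_range_succ_iff.1 hj
  have hPT : ∀ x ∈ T, P.eval x = 0 := fun x hx => (mem_roots hP0).1 (hT ▸ hx)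
  have hjT : (j : ℝ) ∉ T := by simpa [T] using hjS
  have hPj : P.eval (j : ℝ) ≠ 0 := fun h => hjT (by rw [← mem_val, hT]; exact (mem_roots hP0).2 h)
  have hvanish : ∀ x ∈ T, P₁.eval x = 0 ∧ P₂.eval x = 0 := by
    intro x hx
    obtain ⟨i, hi, rfl⟩ := Finset.mem_map.1 hx
    have hil := mem_range_succ_iff.1 (hS hi)
    have hPi := hPT _ hx
    rw [hsum, eval_add] at hPi
    exact (add_eq_zero_iff_of_nonneg (hpos₁ i hil) (hpos₂ i hil)).1 hPi
  have hPj' : 0 ≤ P.eval (j : ℝ) := by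
    rw [hsum, eval_add]; exact add_nonneg (hpos₁ j hjl) (hpos₂ j hjl)
  refine ⟨_, _, div_nonneg (hpos₁ j hjl) hPj', div_nonneg (hpos₂ j hjl) hPj',
    eq_smul_of_eval_eq_zero (hPn.trans hTn.symm).le (hd₁.trans hTn.ge) hPT
      (fun x hx => (hvanish x hx).1) hjT hPj,
    eq_smul_of_eval_eq_zero (hPn.trans hTn.symm).le (hd₂.trans hTn.ge) hPT
      (fun x hx => (hvanish x hx).2) hjT hPj⟩

end GridCone

theorem stmt_9_general (n l : ℕ) (hnl : n ≤ l)
    (P : Polynomial ℝ) (hP0 : P ≠ 0) (hdeg : P.natDegree ≤ n)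
    (hpos : ∀ i ≤ l, 0 ≤ P.eval (i : ℝ)) :
    (∀ P₁ P₂ : Polynomial ℝ, P₁.natDegree ≤ n → P₂.natDegree ≤ n →
        (∀ i ≤ l, 0 ≤ P₁.eval (i : ℝ)) → (∀ i ≤ l, 0 ≤ P₂.eval (i : ℝ)) →
        P = P₁ + P₂ →
        ∃ c₁ c₂ : ℝ, 0 ≤ c₁ ∧ 0 ≤ c₂ ∧ P₁ = c₁ • P ∧ P₂ = c₂ • P)
      ↔ (P.natDegree = n ∧
          ∃ S : Finset ℕ, S ⊆ Finset.range (l + 1) ∧ S.card = n ∧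
            P.roots = S.val.map (fun i => (i : ℝ))) := by
  -- `S.val.map (fun i => (i : ℝ))` elaborates with `S.val` coerced to `Multiset ℝ`;
  -- `simp` rewrites it to the image of `S.val` under the cast.
  constructor
  · intro hext
    obtain ⟨hZn, hPn, hroots⟩ := IsExtremeOnGrid.roots_eq_gridZeros hnl hext hP0 hdeg hpos
    exact ⟨hPn, gridZeros l P, filter_subset _ _, hZn, by simpa using hroots⟩
  · rintro ⟨hPn, S, hS, hSn, hroots⟩
    exact isExtremeOnGrid_of_roots_eq hnl hP0 hPn hS hSn (by simpa using hroots)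

theorem stmt_9 (n l : ℕ) (hn : 1 ≤ n) (hnl : n ≤ l)
    (P : Polynomial ℝ) (hP0 : P ≠ 0) (hdeg : P.natDegree ≤ n)
    (hpos : ∀ i ≤ l, 0 ≤ P.eval (i : ℝ)) :
    (∀ P₁ P₂ : Polynomial ℝ, P₁.natDegree ≤ n → P₂.natDegree ≤ n →
        (∀ i ≤ l, 0 ≤ P₁.eval (i : ℝ)) → (∀ i ≤ l, 0 ≤ P₂.eval (i : ℝ)) →
        P = P₁ + P₂ →
        ∃ c₁ c₂ : ℝ, 0 ≤ c₁ ∧ 0 ≤ c₂ ∧ P₁ = c₁ • P ∧ P₂ = c₂ • P)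
      ↔ (P.natDegree = n ∧
          ∃ S : Finset ℕ, S ⊆ Finset.range (l + 1) ∧ S.card = n ∧
            P.roots = S.val.map (fun i => (i : ℝ))) :=
  stmt_9_general n l hnl P hP0 hdeg hpos
end

section
/- Let $1 \le n \le l$ be integers and $v_1,\dots,v_n$ be real numbers. There exists a random variable $N$ taking values in $\{0,1,\dots,l\}$ with $E[N^k] = v_k$ for $k=1,\dots,n$ if and only if $c_0 + \sum_{i=1}^n c_i v_i \ge 0$ for every polynomial $P(x) = \sum_{i=0}^n c_i x^i$ of degree $n$ that has $n$ simple roots in $\{0,\dots,l\}$ and is nonnegative on $\{0,\dots,l\}$. -/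
/-!
Write `L_v(P) = P.coeff 0 + ∑_{1 ≤ i ≤ n} P.coeff i * v i`, so that `L_v(P) = E[P(N)]` whenever
`v` is the moment sequence of `N`. If `v` is not a moment sequence of a distribution on
`G = {0, …, l}`, then `(v₁, …, vₙ)` lies outside the convex hull of the moment points
`(m, …, mⁿ)`, `m ∈ G`, and Hahn–Banach separation produces a polynomial `P` of degree `≤ n`,
nonnegative on `G`, with `L_v(P) < 0`.

Such a `P` can be pushed to an extremal one: while `P` has fewer than `n` zeros in `G`, take
`d = ∏ (X - x)` over these zeros and one further point of `G`. Moving from `P` along `±d` in the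
direction in which `L_v` does not increase, either `±d` is itself a counterexample or one reaches
the boundary of the cone of polynomials nonnegative on `G`, which creates a new zero. A
counterexample with `n` zeros in `G` has exactly these simple roots, contradicting the hypothesis.
-/

open MeasureTheory Polynomial Finset

theorem Finset.exists_weights_of_mem_convexHull_image {𝕜 ι E : Type*} [Field 𝕜] [LinearOrder 𝕜]
    [IsStrictOrderedRing 𝕜] [AddCommGroup E] [Module 𝕜 E] {s : Finset ι} {g : ι → E} {y : E}
    (hy : y ∈ convexHull 𝕜 (g '' s)) :
    ∃ p : ι → 𝕜, (∀ i ∈ s, 0 ≤ p i) ∧ ∑ i ∈ s, p i = 1 ∧ ∑ i ∈ s, p i • g i = y := by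
  classical
  suffices h : convexHull 𝕜 (g '' s) ⊆
      {y | ∃ p : ι → 𝕜, (∀ i ∈ s, 0 ≤ p i) ∧ ∑ i ∈ s, p i = 1 ∧ ∑ i ∈ s, p i • g i = y} from h hy
  refine convexHull_min ?_ ?_
  · rintro _ ⟨i, hi : i ∈ s, rfl⟩
    exact ⟨fun j => if j = i then 1 else 0, fun j _ => by positivity, by simp [hi], by simp [hi]⟩
  · rintro _ ⟨p, hp0, hp1, rfl⟩ _ ⟨q, hq0, hq1, rfl⟩ a b ha hb hab
    refine ⟨a • p + b • q, fun i hi => ?_, ?_, ?_⟩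
    · have := hp0 i hi
      have := hq0 i hi
      simp only [Pi.add_apply, Pi.smul_apply, smul_eq_mul]
      positivity
    · simp [sum_add_distrib, ← mul_sum, hp1, hq1, hab]
    · simp [add_smul, mul_smul, sum_add_distrib, ← smul_sum]

namespace Polynomial

section MomentFunctional

noncomputable def momentFunctional (n : ℕ) (v : ℕ → ℝ) : ℝ[X] →ₗ[ℝ] ℝ :=
  lcoeff ℝ 0 + ∑ i ∈ Icc 1 n, v i • lcoeff ℝ i

@[simp]
theorem momentFunctional_apply (n : ℕ) (v : ℕ → ℝ) (P : ℝ[X]) :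
    momentFunctional n v P = P.coeff 0 + ∑ i ∈ Icc 1 n, P.coeff i * v i := by
  simp [momentFunctional, mul_comm]

theorem momentFunctional_C (n : ℕ) (v : ℕ → ℝ) (a : ℝ) : momentFunctional n v (C a) = a := by
  simp [coeff_C]

theorem momentFunctional_X_pow {n k : ℕ} (v : ℕ → ℝ) (hk : k ∈ Icc 1 n) :
    momentFunctional n v (X ^ k) = v k := by
  obtain ⟨hk1, hkn⟩ := mem_Icc.1 hk
  have hk0 : 0 ≠ k := by omega
  simp [coeff_X_pow, hk0, hk1, hkn]

theorem eval_eq_momentFunctional {n : ℕ} {P : ℝ[X]} (hP : P.natDegree ≤ n) (x : ℝ) :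
    P.eval x = momentFunctional n (x ^ ·) P := by
  rw [momentFunctional_apply, eval_eq_sum_range' (Nat.lt_succ_of_le hP), range_eq_Ico,
    sum_eq_sum_Ico_succ_bot (Nat.succ_pos n), pow_zero, mul_one]
  rfl

theorem momentFunctional_eq_sum_eval {ι : Type*} {n : ℕ} {v : ℕ → ℝ} {P : ℝ[X]}
    (hP : P.natDegree ≤ n) (s : Finset ι) (x p : ι → ℝ) (hp : ∑ m ∈ s, p m = 1)
    (hv : ∀ k ∈ Icc 1 n, v k = ∑ m ∈ s, p m * x m ^ k) :
    momentFunctional n v P = ∑ m ∈ s, p m * P.eval (x m) := by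
  simp_rw [eval_eq_momentFunctional hP, momentFunctional_apply, mul_add, sum_add_distrib,
    ← sum_mul, hp, one_mul, mul_sum]
  congr 1
  rw [sum_comm]
  refine sum_congr rfl fun k hk => ?_
  rw [hv k hk, mul_sum]
  exact sum_congr rfl fun m _ => by ring

theorem exists_momentFunctional_eq_sub {n : ℕ} (f : (Icc 1 n → ℝ) →ₗ[ℝ] ℝ) (u : ℝ) :
    ∃ P : ℝ[X], P.natDegree ≤ n ∧
      ∀ v : ℕ → ℝ, momentFunctional n v P = f (fun i => v i) - u := by
  classical
  refine ⟨∑ i : Icc 1 n, f (fun j => if i = j then 1 else 0) • X ^ (i : ℕ) - C u, ?_,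
    fun v => ?_⟩
  · refine (natDegree_sub_le _ _).trans
      (max_le (natDegree_sum_le_of_forall_le _ _ fun i _ => ?_) (by simp))
    exact (natDegree_smul_le _ _).trans ((natDegree_X_pow_le _).trans (mem_Icc.1 i.2).2)
  · simp only [map_sub, map_sum, map_smul, momentFunctional_C, smul_eq_mul,
      f.pi_apply_eq_sum_univ (fun i => v i)]
    congr 1
    exact sum_congr rfl fun i _ => by rw [momentFunctional_X_pow v i.2, mul_comm]

theorem exists_weights_of_momentFunctional_nonneg {ι : Type*} {n : ℕ} {v : ℕ → ℝ}
    (s : Finset ι) (x : ι → ℝ)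
    (h : ∀ P : ℝ[X], P.natDegree ≤ n → (∀ m ∈ s, 0 ≤ P.eval (x m)) →
      0 ≤ momentFunctional n v P) :
    ∃ p : ι → ℝ, (∀ m ∈ s, 0 ≤ p m) ∧ ∑ m ∈ s, p m = 1 ∧
      ∀ k ∈ Icc 1 n, v k = ∑ m ∈ s, p m * x m ^ k := by
  have hv : (fun i : Icc 1 n => v i) ∈
      convexHull ℝ ((fun m (i : Icc 1 n) => x m ^ (i : ℕ)) '' s) := by
    by_contra hv
    obtain ⟨f, u, hfv, hfs⟩ := geometric_hahn_banach_point_closed (convex_convexHull ℝ _)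
      ((s.finite_toSet.image _).isCompact_convexHull (𝕜 := ℝ)).isClosed hv
    obtain ⟨P, hPn, hP⟩ := exists_momentFunctional_eq_sub f.toLinearMap u
    have hPs : ∀ m ∈ s, 0 ≤ P.eval (x m) := fun m hm => by
      have := hfs _ (subset_convexHull ℝ _ ⟨m, hm, rfl⟩)
      rw [eval_eq_momentFunctional hPn, hP, ContinuousLinearMap.coe_coe]
      linarith
    have := h P hPn hPs
    rw [hP, ContinuousLinearMap.coe_coe] at this
    linarith
  obtain ⟨p, hp0, hp1, hpv⟩ := Finset.exists_weights_of_mem_convexHull_image hv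
  refine ⟨p, hp0, hp1, fun k hk => ?_⟩
  simpa [Finset.sum_apply, mul_comm] using (congrFun hpv ⟨k, hk⟩).symm

end MomentFunctional

section Descent

variable {n : ℕ} {G : Finset ℝ}

noncomputable def zeroSet (G : Finset ℝ) (P : ℝ[X]) : Finset ℝ := {x ∈ G | P.IsRoot x}

def nonnegCone (n : ℕ) (G : Finset ℝ) : Set ℝ[X] :=
  {P | P.natDegree ≤ n ∧ ∀ x ∈ G, 0 ≤ P.eval x}

theorem zeroSet_neg (P : ℝ[X]) : zeroSet G (-P) = zeroSet G P := by
  simp [zeroSet]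

theorem zeroSet_val_le_roots {P : ℝ[X]} (hP : P ≠ 0) : (zeroSet G P).val ≤ P.roots :=
  (Multiset.le_iff_subset (zeroSet G P).nodup).2 fun _ hx => (mem_roots hP).2 (mem_filter.1 hx).2

theorem card_zeroSet_le {P : ℝ[X]} (hP : P ≠ 0) : #(zeroSet G P) ≤ P.natDegree :=
  (Multiset.card_le_card (zeroSet_val_le_roots hP)).trans (card_roots' P)

theorem roots_eq_zeroSet {P : ℝ[X]} (hP : P ≠ 0) (hPn : P.natDegree ≤ n)
    (hZ : n ≤ #(zeroSet G P)) : P.natDegree = n ∧ P.roots = (zeroSet G P).val := by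
  have hle := zeroSet_val_le_roots (G := G) hP
  have hcard := card_roots' P
  refine ⟨le_antisymm hPn (hZ.trans (card_zeroSet_le hP)), ?_⟩
  exact (Multiset.eq_of_le_of_card_le hle (by simp only [card_val]; omega)).symm

theorem exists_add_smul_mem_nonnegCone {c e : ℝ[X]} (hc : c ∈ nonnegCone n G)
    (hen : e.natDegree ≤ n) (hce : ∀ x ∈ zeroSet G c, e.IsRoot x)
    (hneg : ∃ x ∈ G, e.eval x < 0) :
    ∃ t : ℝ, 0 ≤ t ∧ c + t • e ∈ nonnegCone n G ∧ zeroSet G c ⊂ zeroSet G (c + t • e) := by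
  obtain ⟨x₀, hx₀, hmin⟩ := (G.filter (e.eval · < 0)).exists_min_image
    (fun x => c.eval x / -e.eval x) (by simpa [Finset.Nonempty] using hneg)
  obtain ⟨hx₀G, hex₀⟩ := mem_filter.1 hx₀
  set t := c.eval x₀ / -e.eval x₀
  have ht : 0 ≤ t := div_nonneg (hc.2 x₀ hx₀G) (by linarith)
  refine ⟨t, ht, ⟨?_, fun x hx => ?_⟩, ?_⟩
  · exact (natDegree_add_le _ _).trans (max_le hc.1 ((natDegree_smul_le _ _).trans hen))
  · simp only [eval_add, eval_smul, smul_eq_mul]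
    by_cases hex : e.eval x < 0
    · have := hmin x (mem_filter.2 ⟨hx, hex⟩)
      rw [le_div_iff₀ (by linarith)] at this
      linarith
    · exact add_nonneg (hc.2 x hx) (mul_nonneg ht (not_lt.1 hex))
  · refine (ssubset_iff_of_subset fun x hx => ?_).2 ⟨x₀, mem_filter.2 ⟨hx₀G, ?_⟩, fun h => ?_⟩
    · obtain ⟨hxG, hcx⟩ := mem_filter.1 hx
      refine mem_filter.2 ⟨hxG, ?_⟩
      rw [IsRoot.def, eval_add, eval_smul, hcx.eq_zero, (hce x hx).eq_zero, smul_zero, add_zero]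
    · have : e.eval x₀ ≠ 0 := hex₀.ne
      simp only [IsRoot, eval_add, eval_smul, smul_eq_mul, t]
      field_simp
      ring
    · exact hex₀.ne (hce x₀ h)

theorem exists_natDegree_le_ssubset_zeroSet {Z : Finset ℝ} (hZG : Z ⊆ G) (hZn : #Z < n)
    (hG : n < #G) : ∃ d : ℝ[X], d ≠ 0 ∧ d.natDegree ≤ n ∧ Z ⊂ zeroSet G d := by
  obtain ⟨α, hαG, hαZ⟩ := exists_mem_notMem_of_card_lt_card (s := Z) (t := G) (by omega)
  refine ⟨∏ x ∈ insert α Z, (X - C x),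
    (monic_prod_of_monic _ _ fun x _ => monic_X_sub_C x).ne_zero, ?_, ?_⟩
  · simpa [natDegree_finsetProd_X_sub_C_eq_card, card_insert_of_notMem hαZ] using hZn
  refine (ssubset_insert hαZ).trans_subset fun x hx => mem_filter.2 ⟨?_, ?_⟩
  · exact (mem_insert.1 hx).elim (· ▸ hαG) fun hx => hZG hx
  · simp only [IsRoot.def, eval_prod, eval_sub, eval_X, eval_C]
    exact prod_eq_zero hx (sub_self x)

theorem exists_mem_nonnegCone_zeroSet_ssuperset (L : ℝ[X] →ₗ[ℝ] ℝ) (hG : n < #G) {c : ℝ[X]}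
    (hc : c ∈ nonnegCone n G) (hLc : L c < 0) (hcZ : #(zeroSet G c) < n) :
    ∃ c' ∈ nonnegCone n G, L c' < 0 ∧ zeroSet G c ⊂ zeroSet G c' := by
  obtain ⟨d, hd, hdn, hcd⟩ := exists_natDegree_le_ssubset_zeroSet (filter_subset _ _) hcZ hG
  obtain ⟨β, hβG, hβ⟩ :=
    exists_mem_notMem_of_card_lt_card ((card_zeroSet_le hd).trans_lt (hdn.trans_lt hG))
  have hstep : ∀ e : ℝ[X], e.natDegree ≤ n → zeroSet G e = zeroSet G d → L e ≤ 0 →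
      (∃ x ∈ G, e.eval x < 0) → ∃ c' ∈ nonnegCone n G, L c' < 0 ∧ zeroSet G c ⊂ zeroSet G c' := by
    intro e hen heZ hLe hneg
    obtain ⟨t, ht, hK, hZ⟩ := exists_add_smul_mem_nonnegCone hc hen
      (fun x hx => (mem_filter.1 (heZ ▸ hcd.subset hx)).2) hneg
    refine ⟨_, hK, ?_, hZ⟩
    rw [map_add, map_smul, smul_eq_mul]
    nlinarith
  obtain ⟨f, hfn, hfZ, hLf⟩ :
      ∃ f : ℝ[X], f.natDegree ≤ n ∧ zeroSet G f = zeroSet G d ∧ L f ≤ 0 := by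
    rcases le_total (L d) 0 with h | h
    · exact ⟨d, hdn, rfl, h⟩
    · exact ⟨-d, by rwa [natDegree_neg], zeroSet_neg d, by simpa using h⟩
  by_cases hneg : ∃ x ∈ G, f.eval x < 0
  · exact hstep f hfn hfZ hLf hneg
  have hfK : f ∈ nonnegCone n G := ⟨hfn, by simpa using hneg⟩
  rcases hLf.lt_or_eq with hLf | hLf
  · exact ⟨f, hfK, hLf, hfZ ▸ hcd⟩
  -- `L f = 0` and `f ≥ 0` on `G` with `f β > 0`, so `-f` is a valid direction instead.
  refine hstep (-f) (by rwa [natDegree_neg]) (by rw [zeroSet_neg, hfZ]) (by simp [hLf])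
    ⟨β, hβG, ?_⟩
  have hfβ : f.eval β ≠ 0 := fun h => hβ (hfZ ▸ show β ∈ zeroSet G f from mem_filter.2 ⟨hβG, h⟩)
  simpa using (hfK.2 β hβG).lt_of_ne hfβ.symm

theorem map_nonneg_of_mem_nonnegCone (L : ℝ[X] →ₗ[ℝ] ℝ) (hG : n < #G)
    (h : ∀ P : ℝ[X], P.natDegree = n → (∃ S ⊆ G, #S = n ∧ P.roots = S.val) →
      (∀ x ∈ G, 0 ≤ P.eval x) → 0 ≤ L P) {P : ℝ[X]} (hP : P ∈ nonnegCone n G) : 0 ≤ L P := by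
  by_contra! hLP
  obtain ⟨c, ⟨hc, hLc⟩, hmin⟩ := (measure fun c => n - #(zeroSet G c)).wf.has_min
    {c | c ∈ nonnegCone n G ∧ L c < 0} ⟨P, hP, hLP⟩
  rcases lt_or_ge #(zeroSet G c) n with hcZ | hcZ
  · obtain ⟨c', hc', hLc', hcc'⟩ := exists_mem_nonnegCone_zeroSet_ssuperset L hG hc hLc hcZ
    have := card_lt_card hcc'
    exact hmin c' ⟨hc', hLc'⟩ (show n - #(zeroSet G c') < n - #(zeroSet G c) by omega)
  · have hc0 : c ≠ 0 := by rintro rfl; simp at hLc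
    obtain ⟨hcn, hroots⟩ := roots_eq_zeroSet hc0 hc.1 hcZ
    exact (h c hcn ⟨_, filter_subset _ _, le_antisymm (hcn ▸ card_zeroSet_le hc0) hcZ, hroots⟩
      hc.2).not_gt hLc

end Descent

end Polynomial

namespace MeasureTheory

variable {α : Type*} [MeasurableSpace α] [MeasurableSingletonClass α]

theorem exists_isProbabilityMeasure_toReal_measure_singleton (s : Finset α) (p : α → ℝ)
    (hp0 : ∀ a ∈ s, 0 ≤ p a) (hp1 : ∑ a ∈ s, p a = 1) :
    ∃ κ : Measure α, IsProbabilityMeasure κ ∧ (∀ a ∉ s, κ {a} = 0) ∧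
      ∀ a ∈ s, (κ {a}).toReal = p a := by
  classical
  let f : α → ENNReal := fun a => if a ∈ s then ENNReal.ofReal (p a) else 0
  have hf : ∑ a ∈ s, f a = 1 := by
    rw [sum_congr rfl fun a ha => if_pos ha, ← ENNReal.ofReal_sum_of_nonneg hp0, hp1,
      ENNReal.ofReal_one]
  refine ⟨(PMF.ofFinset f s hf fun a ha => if_neg ha).toMeasure, inferInstance,
    fun a ha => ?_, fun a ha => ?_⟩ <;>
  simp [PMF.toMeasure_apply_singleton, f, ha, hp0]

theorem sum_toReal_measure_singleton_eq_one [Countable α] (κ : Measure α)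
    [IsProbabilityMeasure κ] {s : Finset α} (h : ∀ a ∉ s, κ {a} = 0) :
    ∑ a ∈ s, (κ {a}).toReal = 1 := by
  have hsc : κ (s : Set α)ᶜ = 0 := by
    rw [← Set.biUnion_of_singleton (s : Set α)ᶜ, measure_biUnion_null_iff (Set.to_countable _)]
    exact fun a ha => h a ha
  rw [← ENNReal.toReal_sum fun a _ => measure_ne_top κ _, sum_measure_singleton,
    (prob_compl_eq_zero_iff s.measurableSet).1 hsc, ENNReal.toReal_one]

end MeasureTheory

theorem stmt_10_general (n l : ℕ) (hnl : n ≤ l) (v : ℕ → ℝ) :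
    (∃ κ : Measure ℕ, IsProbabilityMeasure κ ∧ (∀ m, l < m → κ {m} = 0) ∧
        ∀ k, 1 ≤ k → k ≤ n →
          v k = ∑' m : ℕ, (κ {m}).toReal * (m : ℝ) ^ k)
      ↔ (∀ P : Polynomial ℝ, P.natDegree = n →
          (∃ S : Finset ℕ, S ⊆ Finset.range (l + 1) ∧ S.card = n ∧
            P.roots = S.val.map (fun i => (i : ℝ))) →
          (∀ i ≤ l, 0 ≤ P.eval (i : ℝ)) →
          0 ≤ P.coeff 0 + ∑ i ∈ Finset.Icc 1 n, P.coeff i * v i) := by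
  have hl : ∀ m, m ∉ range (l + 1) ↔ l < m := by simp
  simp_rw [← momentFunctional_apply, ← hl]
  constructor
  · rintro ⟨κ, hκ, hκl, hκv⟩ P hPn - hP
    rw [momentFunctional_eq_sum_eval hPn.le (range (l + 1)) (fun m : ℕ => (m : ℝ))
      (fun m => (κ {m}).toReal) (sum_toReal_measure_singleton_eq_one κ hκl) fun k hk => ?_]
    · exact sum_nonneg fun m hm =>
        mul_nonneg ENNReal.toReal_nonneg (hP m (by simpa [Nat.lt_succ_iff] using hm))
    · rw [hκv k (mem_Icc.1 hk).1 (mem_Icc.1 hk).2]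
      exact tsum_eq_sum fun m hm => by simp [hκl m hm]
  · intro h
    set G : Finset ℝ := (range (l + 1)).map Nat.castEmbedding
    have hK : ∀ P ∈ nonnegCone n G, 0 ≤ momentFunctional n v P := by
      refine fun P => map_nonneg_of_mem_nonnegCone _ (by simpa [G] using hnl) ?_
      rintro P hPn ⟨S', hS'G, hS', hroots⟩ hPG
      obtain ⟨S, hS, rfl⟩ := subset_map_iff.1 hS'G
      exact h P hPn ⟨S, hS, by simpa using hS', by simpa using hroots⟩
        fun i hi => hPG _ (by simp [G]; omega)
    obtain ⟨p, hp0, hp1, hpv⟩ := exists_weights_of_momentFunctional_nonneg (range (l + 1))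
      (fun m : ℕ => (m : ℝ)) fun P hPn hP => hK P ⟨hPn, by simpa [G] using hP⟩
    obtain ⟨κ, hκ, hκl, hκp⟩ := exists_isProbabilityMeasure_toReal_measure_singleton _ p hp0 hp1
    refine ⟨κ, hκ, hκl, fun k hk1 hkn => ?_⟩
    rw [hpv k (mem_Icc.2 ⟨hk1, hkn⟩), tsum_eq_sum fun m hm => by simp [hκl m hm]]
    exact sum_congr rfl fun m hm => by rw [hκp m hm]

theorem stmt_10 (n l : ℕ) (hn : 1 ≤ n) (hnl : n ≤ l) (v : ℕ → ℝ) :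
    (∃ κ : Measure ℕ, IsProbabilityMeasure κ ∧ (∀ m, l < m → κ {m} = 0) ∧
        ∀ k, 1 ≤ k → k ≤ n →
          v k = ∑' m : ℕ, (κ {m}).toReal * (m : ℝ) ^ k)
      ↔ (∀ P : Polynomial ℝ, P.natDegree = n →
          (∃ S : Finset ℕ, S ⊆ Finset.range (l + 1) ∧ S.card = n ∧
            P.roots = S.val.map (fun i => (i : ℝ))) →
          (∀ i ≤ l, 0 ≤ P.eval (i : ℝ)) →
          0 ≤ P.coeff 0 + ∑ i ∈ Finset.Icc 1 n, P.coeff i * v i) :=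
  stmt_10_general n l hnl v
end

section
/- Let $P$ be a polynomial with real coefficients that has $n$ simple roots, all contained in $\{0,1,\dots,l\}$, and satisfies $P(i) \ge 0$ for all $i \in \{0,\dots,l\}$, where $n = \deg P$. Then the set of roots of $P$ is of the form $\{x_1, x_1+1\} \cup \cdots \cup \{x_p, x_p+1\} \cup A$, where the pairs are disjoint and $A = \emptyset$ or $A = \{0,l\}$ if $n$ is even, and $A = \{0\}$ or $A = \{l\}$ if $n$ is odd. -/
open Polynomial Finset

-- pair-removal step
lemma step_pair (l x : ℕ) (S : Finset ℕ) (hx : x ∈ S) (hx1 : x + 1 ∈ S)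
    (h : ∃ T A : Finset ℕ,
      (S.erase x).erase (x+1) = T.biUnion (fun y => {y, y + 1}) ∪ A ∧
      (∀ a ∈ T, ∀ b ∈ T, a ≠ b → Disjoint ({a, a + 1} : Finset ℕ) {b, b + 1}) ∧
      Disjoint (T.biUnion (fun y => {y, y + 1})) A ∧
      (Even ((S.erase x).erase (x+1)).card → A = ∅ ∨ A = {0, l}) ∧
      (Odd ((S.erase x).erase (x+1)).card → A = {0} ∨ A = {l})) :
    ∃ T A : Finset ℕ,
      S = T.biUnion (fun y => {y, y + 1}) ∪ A ∧
      (∀ a ∈ T, ∀ b ∈ T, a ≠ b → Disjoint ({a, a + 1} : Finset ℕ) {b, b + 1}) ∧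
      Disjoint (T.biUnion (fun y => {y, y + 1})) A ∧
      (Even S.card → A = ∅ ∨ A = {0, l}) ∧
      (Odd S.card → A = {0} ∨ A = {l}) := by
  obtain ⟨T, A, hdec, hpair, hdisj, heven, hodd⟩ := h
  set S' := (S.erase x).erase (x+1) with hS'
  have hmemS' : ∀ a, a ∈ S' ↔ (a ≠ x+1 ∧ a ≠ x ∧ a ∈ S) := by
    intro a; simp [hS', Finset.mem_erase]
  have hxS' : x ∉ S' := by simp [hmemS']
  have hx1S' : x + 1 ∉ S' := by simp [hmemS']
  have hsubB : T.biUnion (fun y => {y, y + 1}) ⊆ S' := by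
    rw [hdec]; exact Finset.subset_union_left
  have hsubA : A ⊆ S' := by rw [hdec]; exact Finset.subset_union_right
  have hxT : x ∉ T := by
    intro hxT
    exact hxS' (hsubB (Finset.mem_biUnion.2 ⟨x, hxT, by simp⟩))
  have hcard : S'.card + 2 = S.card := by
    have h1 : x + 1 ∈ S.erase x := Finset.mem_erase.2 ⟨by omega, hx1⟩
    have c1 : S'.card = (S.erase x).card - 1 := Finset.card_erase_of_mem h1
    have c2 : (S.erase x).card = S.card - 1 := Finset.card_erase_of_mem hx
    have p1 : 0 < (S.erase x).card := Finset.card_pos.2 ⟨_, h1⟩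
    have p2 : 0 < S.card := Finset.card_pos.2 ⟨_, hx⟩
    omega
  refine ⟨insert x T, A, ?_, ?_, ?_, ?_, ?_⟩
  · rw [Finset.biUnion_insert, Finset.union_assoc, ← hdec]
    ext a
    simp only [Finset.mem_union, Finset.mem_insert, Finset.mem_singleton, hmemS']
    constructor
    · intro ha
      by_cases h1 : a = x; · left; left; exact h1
      by_cases h2 : a = x + 1; · left; right; exact h2
      right; exact ⟨h2, h1, ha⟩
    · rintro ((rfl | rfl) | ⟨_, _, ha⟩) <;> [exact hx; exact hx1; exact ha]
  · intro a ha b hb hab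
    rcases Finset.mem_insert.1 ha with rfl | haT
    · rcases Finset.mem_insert.1 hb with rfl | hb
      · exact absurd rfl hab
      · rw [Finset.disjoint_left]
        intro c hc hc2
        have hcS : c ∈ S' := hsubB (Finset.mem_biUnion.2 ⟨b, hb, hc2⟩)
        rcases Finset.mem_insert.1 hc with rfl | hc
        · exact hxS' hcS
        · rw [Finset.mem_singleton] at hc; subst hc; exact hx1S' hcS
    · rcases Finset.mem_insert.1 hb with rfl | hb
      · rw [Finset.disjoint_right]
        intro c hc hc2
        have hcS : c ∈ S' := hsubB (Finset.mem_biUnion.2 ⟨a, haT, hc2⟩)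
        rcases Finset.mem_insert.1 hc with rfl | hc
        · exact hxS' hcS
        · rw [Finset.mem_singleton] at hc; subst hc; exact hx1S' hcS
      · exact hpair a haT b hb hab
  · rw [Finset.biUnion_insert, Finset.disjoint_union_left]
    refine ⟨?_, hdisj⟩
    rw [Finset.disjoint_left]
    intro c hc hcA
    have hcS : c ∈ S' := hsubA hcA
    rcases Finset.mem_insert.1 hc with rfl | hc
    · exact hxS' hcS
    · rw [Finset.mem_singleton] at hc; subst hc; exact hx1S' hcS
  · intro hE
    apply heven
    rw [Nat.even_iff] at hE ⊢; omega
  · intro hO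
    apply hodd
    rw [Nat.odd_iff] at hO ⊢; omega

lemma comb (N : ℕ) : ∀ (l : ℕ) (S : Finset ℕ), S.card ≤ N → S ⊆ Finset.range (l + 1) →
    (∀ j1 j2, j1 ≤ l → j2 ≤ l → j1 ∉ S → j2 ∉ S →
      Even ((S.filter (fun i => j1 < i ∧ i < j2)).card)) →
    ∃ T A : Finset ℕ,
      S = T.biUnion (fun y => {y, y + 1}) ∪ A ∧
      (∀ a ∈ T, ∀ b ∈ T, a ≠ b → Disjoint ({a, a + 1} : Finset ℕ) {b, b + 1}) ∧
      Disjoint (T.biUnion (fun y => {y, y + 1})) A ∧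
      (Even S.card → A = ∅ ∨ A = {0, l}) ∧
      (Odd S.card → A = {0} ∨ A = {l}) := by
  induction N with
  | zero =>
    intro l S hcard _ _
    have : S = ∅ := Finset.card_eq_zero.1 (Nat.le_zero.1 hcard)
    subst this
    exact ⟨∅, ∅, by simp, by simp, by simp, fun _ => Or.inl rfl, fun h => by simp at h⟩
  | succ N ih =>
    intro l S hcard hsub hH2
    by_cases hemp : S = ∅
    · subst hemp
      exact ⟨∅, ∅, by simp, by simp, by simp, fun _ => Or.inl rfl, fun h => by simp at h⟩
    have hSl : ∀ a ∈ S, a ≤ l := fun a ha => by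
      have := hsub ha; simp [Finset.mem_range] at this; omega
    by_cases h0 : 0 ∈ S
    · -- left run
      set Q : ℕ → Prop := fun k => ∀ i ≤ k, i ∈ S with hQ
      have hQ0 : Q 0 := by
        intro i hi
        have hi0 : i = 0 := Nat.le_zero.1 hi
        subst hi0; exact h0
      set r := Nat.findGreatest Q l with hr
      have hQr : Q r := Nat.findGreatest_spec (Nat.zero_le l) hQ0
      have hrl : r ≤ l := Nat.findGreatest_le l
      have hr1 : r + 1 ∉ S := by
        by_cases hrl' : r + 1 ≤ l
        · intro hmem
          have : Q (r + 1) := by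
            intro i hi
            rcases Nat.lt_or_ge i (r+1) with h | h
            · exact hQr i (by omega)
            · have : i = r + 1 := by omega
              rw [this]; exact hmem
          exact absurd (Nat.le_findGreatest hrl' this) (by omega)
        · intro hmem; have := hSl _ hmem; omega
      by_cases hr0 : r = 0
      · -- 1 ∉ S; move 0 into A
        have h1S : 1 ∉ S := by rw [hr0] at hr1; exact hr1
        set S' := S.erase 0 with hS'
        have hmemS' : ∀ a, a ∈ S' ↔ a ≠ 0 ∧ a ∈ S := fun a => Finset.mem_erase
        have hH2' : ∀ j1 j2, j1 ≤ l → j2 ≤ l → j1 ∉ S' → j2 ∉ S' →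
            Even ((S'.filter (fun i => j1 < i ∧ i < j2)).card) := by
          intro j1 j2 hj1 hj2 hj1' hj2'
          have hfe : S'.filter (fun i => j1 < i ∧ i < j2) =
              S.filter (fun i => j1 < i ∧ i < j2) := by
            apply Finset.ext
            intro a
            simp only [Finset.mem_filter, hmemS']
            constructor
            · rintro ⟨⟨_, ha⟩, h⟩; exact ⟨ha, h⟩
            · rintro ⟨ha, h⟩; exact ⟨⟨by omega, ha⟩, h⟩
          rw [hfe]
          by_cases hj20 : j2 = 0
          · subst hj20
            have hemp2 : S.filter (fun i => j1 < i ∧ i < 0) = ∅ := by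
              apply Finset.filter_false_of_mem; intro a _; omega
            rw [hemp2]; simp
          have hj2S : j2 ∉ S := fun h => hj2' (hmemS' j2 |>.2 ⟨hj20, h⟩)
          by_cases hj1S : j1 ∈ S
          · -- j1 = 0
            have hj10 : j1 = 0 := by
              by_contra h; exact hj1' (hmemS' j1 |>.2 ⟨h, hj1S⟩)
            subst hj10
            have hfe2 : S.filter (fun i => 0 < i ∧ i < j2) =
                S.filter (fun i => 1 < i ∧ i < j2) := by
              ext a
              simp only [Finset.mem_filter]
              constructor
              · rintro ⟨ha, h1, h2⟩
                refine ⟨ha, ?_, h2⟩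
                rcases Nat.lt_or_ge 1 a with h | h
                · exact h
                · exfalso
                  have ha1 : a = 1 := by omega
                  subst ha1; exact h1S ha
              · rintro ⟨ha, h1, h2⟩; exact ⟨ha, by omega, h2⟩
            rw [hfe2]
            exact hH2 1 j2 (by omega) hj2 h1S hj2S
          · exact hH2 j1 j2 hj1 hj2 hj1S hj2S
        have hcard' : S'.card + 1 = S.card := by
          have := Finset.card_erase_of_mem h0
          have : S'.card = S.card - 1 := this
          have hp : 0 < S.card := Finset.card_pos.2 ⟨_, h0⟩
          omega
        obtain ⟨T, A, hdec, hpair, hdisj, heven, hodd⟩ :=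
          ih l S' (by omega) (fun a ha => hsub (Finset.mem_erase.1 ha).2) hH2'
        have h0S' : 0 ∉ S' := by simp [hmemS']
        have h0A : 0 ∉ A := fun h => h0S' (hdec ▸ Finset.mem_union_right _ h)
        have h0B : 0 ∉ T.biUnion (fun y => {y, y+1}) := fun h =>
          h0S' (hdec ▸ Finset.mem_union_left _ h)
        refine ⟨T, insert 0 A, ?_, hpair, ?_, ?_, ?_⟩
        · ext a
          simp only [Finset.mem_union, Finset.mem_insert]
          constructor
          · intro ha
            by_cases ha0 : a = 0
            · right; left; exact ha0
            · have : a ∈ S' := (hmemS' a).2 ⟨ha0, ha⟩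
              rw [hdec] at this
              rcases Finset.mem_union.1 this with h | h
              · left; exact h
              · right; right; exact h
          · rintro (h | rfl | h)
            · have : a ∈ S' := hdec ▸ Finset.mem_union_left _ h
              exact ((hmemS' a).1 this).2
            · exact h0
            · have : a ∈ S' := hdec ▸ Finset.mem_union_right _ h
              exact ((hmemS' a).1 this).2
        · rw [Finset.disjoint_right]
          intro c hc
          rcases Finset.mem_insert.1 hc with rfl | hc
          · exact h0B
          · exact fun h => (Finset.disjoint_left.1 hdisj) h hc
        · intro hE
          have hO' : Odd S'.card := by rw [Nat.odd_iff]; rw [Nat.even_iff] at hE; omega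
          rcases hodd hO' with h | h
          · exfalso; rw [h] at h0A; simp at h0A
          · right; rw [h]
        · intro hO
          have hE' : Even S'.card := by rw [Nat.even_iff]; rw [Nat.odd_iff] at hO; omega
          rcases heven hE' with h | h
          · left; rw [h]; simp
          · exfalso; rw [h] at h0A; simp at h0A
      · -- r ≥ 1: remove pair {r-1, r}
        have hrpos : 1 ≤ r := by omega
        have hxr : r - 1 ∈ S := hQr (r-1) (by omega)
        have hxr' : r - 1 + 1 ∈ S := by
          have : r - 1 + 1 = r := by omega
          rw [this]; exact hQr r le_rfl
        apply step_pair l (r-1) S hxr hxr'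
        set S' := (S.erase (r-1)).erase (r-1+1) with hS'
        have hrr : r - 1 + 1 = r := by omega
        have hmemS' : ∀ a, a ∈ S' ↔ a ≠ r ∧ a ≠ r - 1 ∧ a ∈ S := by
          intro a; rw [hS', Finset.mem_erase, Finset.mem_erase, hrr]
        have hcard' : S'.card + 2 = S.card := by
          have h1 : r - 1 + 1 ∈ S.erase (r-1) := Finset.mem_erase.2 ⟨by omega, hxr'⟩
          have c1 : S'.card = (S.erase (r-1)).card - 1 := Finset.card_erase_of_mem h1
          have c2 : (S.erase (r-1)).card = S.card - 1 := Finset.card_erase_of_mem hxr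
          have p1 : 0 < (S.erase (r-1)).card := Finset.card_pos.2 ⟨_, h1⟩
          have p2 : 0 < S.card := Finset.card_pos.2 ⟨_, hxr⟩
          omega
        apply ih l S' (by omega) (fun a ha => hsub ((hmemS' a).1 ha).2.2)
        intro j1 j2 hj1 hj2 hj1' hj2'
        by_cases hj2r : j2 ≤ r
        · have : S'.filter (fun i => j1 < i ∧ i < j2) = ∅ := by
            rw [Finset.filter_eq_empty_iff]
            intro a ha
            rintro ⟨h1, h2⟩
            rcases (hmemS' a).1 ha with ⟨har, har1, haS⟩
            -- a ≤ r - 2, so j1 ≤ r - 3 < r - 1 means j1 ∈ S'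
            have ha2 : a ≤ r - 2 := by omega
            have hj1lt : j1 < r - 2 ∨ j1 = r - 2 ∨ j1 > r - 2 := by omega
            have hj1r : j1 ≤ r - 2 := by omega
            have : j1 ∈ S' := (hmemS' j1).2 ⟨by omega, by omega, hQr j1 (by omega)⟩
            exact hj1' this
          rw [this]; simp
        · push_neg at hj2r
          have hj2S : j2 ∉ S := by
            intro h
            rcases (hmemS' j2).2 ⟨by omega, by omega, h⟩ with h'
            exact hj2' h'
          by_cases hj1r : j1 ≤ r
          · have hfe : S'.filter (fun i => j1 < i ∧ i < j2) =
                S.filter (fun i => r + 1 < i ∧ i < j2) := by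
              ext a
              simp only [Finset.mem_filter, hmemS']
              constructor
              · rintro ⟨⟨h1, h2, h3⟩, h4, h5⟩
                refine ⟨h3, ?_, h5⟩
                -- a ∈ S', a > j1. show a > r + 1
                by_contra hle
                push_neg at hle
                -- a ≤ r + 1, a ≠ r, r - 1, a ∈ S; if a ≤ r - 2 then j1 < a ≤ r-2 → j1 ∈ S'
                by_cases har1 : a = r + 1
                · exact hr1 (har1 ▸ h3)
                · have ha2 : a ≤ r - 2 := by omega
                  have : j1 ∈ S' := (hmemS' j1).2 ⟨by omega, by omega, hQr j1 (by omega)⟩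
                  exact hj1' this
              · rintro ⟨h1, h2, h3⟩
                exact ⟨⟨by omega, by omega, h1⟩, by omega, h3⟩
            rw [hfe]
            exact hH2 (r+1) j2 (by omega) hj2 hr1 hj2S
          · push_neg at hj1r
            have hj1S : j1 ∉ S := by
              intro h
              exact hj1' ((hmemS' j1).2 ⟨by omega, by omega, h⟩)
            have hfe : S'.filter (fun i => j1 < i ∧ i < j2) =
                S.filter (fun i => j1 < i ∧ i < j2) := by
              ext a
              simp only [Finset.mem_filter, hmemS']
              constructor
              · rintro ⟨⟨_, _, h3⟩, h4⟩; exact ⟨h3, h4⟩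
              · rintro ⟨h3, h4, h5⟩; exact ⟨⟨by omega, by omega, h3⟩, h4, h5⟩
            rw [hfe]
            exact hH2 j1 j2 hj1 hj2 hj1S hj2S
    · -- 0 ∉ S
      have hne : S.Nonempty := Finset.nonempty_iff_ne_empty.2 hemp
      set m := S.min' hne with hm
      have hmS : m ∈ S := S.min'_mem hne
      have hmin : ∀ a ∈ S, m ≤ a := fun a ha => S.min'_le a ha
      have hm1 : 1 ≤ m := by
        rcases Nat.eq_zero_or_pos m with h | h
        · exact absurd (h ▸ hmS) h0
        · exact h
      have hml : m ≤ l := hSl _ hmS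
      by_cases hm1S : m + 1 ∈ S
      · apply step_pair l m S hmS hm1S
        set S' := (S.erase m).erase (m+1) with hS'
        have hmemS' : ∀ a, a ∈ S' ↔ a ≠ m + 1 ∧ a ≠ m ∧ a ∈ S := by
          intro a; rw [hS', Finset.mem_erase, Finset.mem_erase]
        have hcard' : S'.card + 2 = S.card := by
          have h1 : m + 1 ∈ S.erase m := Finset.mem_erase.2 ⟨by omega, hm1S⟩
          have c1 : S'.card = (S.erase m).card - 1 := Finset.card_erase_of_mem h1
          have c2 : (S.erase m).card = S.card - 1 := Finset.card_erase_of_mem hmS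
          have p1 : 0 < (S.erase m).card := Finset.card_pos.2 ⟨_, h1⟩
          have p2 : 0 < S.card := Finset.card_pos.2 ⟨_, hmS⟩
          omega
        apply ih l S' (by omega) (fun a ha => hsub ((hmemS' a).1 ha).2.2)
        intro j1 j2 hj1 hj2 hj1' hj2'
        by_cases hj2m : j2 ≤ m + 1
        · have : S'.filter (fun i => j1 < i ∧ i < j2) = ∅ := by
            rw [Finset.filter_eq_empty_iff]
            intro a ha
            rintro ⟨h1, h2⟩
            rcases (hmemS' a).1 ha with ⟨ham1, ham, haS⟩
            have := hmin a haS
            omega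
          rw [this]; simp
        · push_neg at hj2m
          have hj2S : j2 ∉ S := fun h => hj2' ((hmemS' j2).2 ⟨by omega, by omega, h⟩)
          by_cases hj1m : j1 ≤ m + 1
          · have hfe : S'.filter (fun i => j1 < i ∧ i < j2) =
                S.filter (fun i => m - 1 < i ∧ i < j2) \ {m, m+1} := by
              ext a
              simp only [Finset.mem_sdiff, Finset.mem_filter, Finset.mem_insert,
                Finset.mem_singleton, hmemS']
              constructor
              · rintro ⟨⟨h1, h2, h3⟩, h4, h5⟩
                have hma := hmin a h3
                exact ⟨⟨h3, by omega, h5⟩, by omega⟩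
              · rintro ⟨⟨h3, h4, h5⟩, h6⟩
                have := hmin a h3
                exact ⟨⟨by omega, by omega, h3⟩, by omega, h5⟩
            have hcardf : (S.filter (fun i => m - 1 < i ∧ i < j2)).card =
                (S'.filter (fun i => j1 < i ∧ i < j2)).card + 2 := by
              rw [hfe]
              have hsub2 : ({m, m+1} : Finset ℕ) ⊆ S.filter (fun i => m - 1 < i ∧ i < j2) := by
                intro a ha
                rcases Finset.mem_insert.1 ha with rfl | ha
                · exact Finset.mem_filter.2 ⟨hmS, by omega, by omega⟩
                · rw [Finset.mem_singleton] at ha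
                  subst ha
                  exact Finset.mem_filter.2 ⟨hm1S, by omega, by omega⟩
              rw [Finset.card_sdiff_of_subset hsub2]
              have : ({m, m+1} : Finset ℕ).card = 2 := by
                rw [Finset.card_insert_of_notMem (by simp), Finset.card_singleton]
              rw [this]
              have hle : 2 ≤ (S.filter (fun i => m - 1 < i ∧ i < j2)).card := by
                calc 2 = ({m, m+1} : Finset ℕ).card := this.symm
                _ ≤ _ := Finset.card_le_card hsub2
              omega
            have hEv := hH2 (m-1) j2 (by omega) hj2
              (fun h => by have := hmin _ h; omega) hj2S
            rw [hcardf] at hEv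
            rw [Nat.even_iff] at hEv ⊢; omega
          · push_neg at hj1m
            have hj1S : j1 ∉ S := fun h => hj1' ((hmemS' j1).2 ⟨by omega, by omega, h⟩)
            have hfe : S'.filter (fun i => j1 < i ∧ i < j2) =
                S.filter (fun i => j1 < i ∧ i < j2) := by
              ext a
              simp only [Finset.mem_filter, hmemS']
              constructor
              · rintro ⟨⟨_, _, h3⟩, h4⟩; exact ⟨h3, h4⟩
              · rintro ⟨h3, h4, h5⟩; exact ⟨⟨by omega, by omega, h3⟩, h4, h5⟩
            rw [hfe]
            exact hH2 j1 j2 hj1 hj2 hj1S hj2S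
      · -- m + 1 ∉ S
        by_cases hmleq : m = l
        · -- S = {l}
          have hSeq : S = {l} := by
            apply Finset.eq_singleton_iff_unique_mem.2
            refine ⟨hmleq ▸ hmS, ?_⟩
            intro a ha
            have := hmin a ha
            have := hSl a ha
            omega
          refine ⟨∅, {l}, by simpa using hSeq, by simp, by simp, ?_, fun _ => Or.inr rfl⟩
          intro hE
          rw [hSeq, Finset.card_singleton] at hE
          exact absurd hE (by decide)
        · exfalso
          have hEv := hH2 (m-1) (m+1) (by omega) (by omega)
            (fun h => by have := hmin _ h; omega) hm1S
          have : S.filter (fun i => m - 1 < i ∧ i < m + 1) = {m} := by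
            ext a
            simp only [Finset.mem_filter, Finset.mem_singleton]
            constructor
            · rintro ⟨ha, h1, h2⟩
              have := hmin a ha; omega
            · rintro rfl; exact ⟨hmS, by omega, by omega⟩
          rw [this] at hEv
          simp [Nat.even_iff] at hEv

section analytic

variable (S : Finset ℕ)

lemma keySign (j : ℕ) (hj : j ∉ S) :
    0 < (-1 : ℝ) ^ ((S.filter (fun i => j < i)).card) * ∏ i ∈ S, ((j : ℝ) - i) := by
  classical
  have hsplit : ∏ i ∈ S, ((j : ℝ) - i) =
      (∏ i ∈ S.filter (fun i => i < j), ((j : ℝ) - i)) *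
      ∏ i ∈ S.filter (fun i => j < i), ((j : ℝ) - i) := by
    rw [← Finset.prod_filter_mul_prod_filter_not S (fun i => i < j)]
    congr 1
    apply Finset.prod_congr _ (fun _ _ => rfl)
    apply Finset.filter_congr
    intro a ha
    simp only [not_lt]
    constructor
    · intro h
      rcases Nat.lt_or_ge j a with h' | h'
      · exact h'
      · exfalso; have : a = j := by omega
        subst this; exact hj ha
    · intro h; omega
  have hneg : ∏ i ∈ S.filter (fun i => j < i), ((j : ℝ) - i) =
      (-1 : ℝ) ^ ((S.filter (fun i => j < i)).card) *
      ∏ i ∈ S.filter (fun i => j < i), ((i : ℝ) - j) := by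
    rw [← Finset.prod_const, ← Finset.prod_mul_distrib]
    apply Finset.prod_congr rfl
    intro i _
    ring
  have hpos1 : 0 < ∏ i ∈ S.filter (fun i => i < j), ((j : ℝ) - i) := by
    apply Finset.prod_pos
    intro i hi
    have : i < j := (Finset.mem_filter.1 hi).2
    have : (i : ℝ) < j := by exact_mod_cast this
    linarith
  have hpos2 : 0 < ∏ i ∈ S.filter (fun i => j < i), ((i : ℝ) - j) := by
    apply Finset.prod_pos
    intro i hi
    have : j < i := (Finset.mem_filter.1 hi).2
    have : (j : ℝ) < i := by exact_mod_cast this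
    linarith
  rw [hsplit, hneg]
  have hsq : ((-1 : ℝ) ^ ((S.filter (fun i => j < i)).card)) *
      ((-1 : ℝ) ^ ((S.filter (fun i => j < i)).card)) = 1 := by
    rw [← pow_add]
    exact Even.neg_one_pow ⟨_, rfl⟩
  calc (0:ℝ) < (∏ i ∈ S.filter (fun i => i < j), ((j : ℝ) - i)) *
      ∏ i ∈ S.filter (fun i => j < i), ((i : ℝ) - j) := mul_pos hpos1 hpos2
  _ = (-1 : ℝ) ^ ((S.filter (fun i => j < i)).card) *
      ((∏ i ∈ S.filter (fun i => i < j), ((j : ℝ) - i)) *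
      ((-1 : ℝ) ^ ((S.filter (fun i => j < i)).card) *
      ∏ i ∈ S.filter (fun i => j < i), ((i : ℝ) - j))) := by
    rw [show ∀ a b c : ℝ, a * (b * (a * c)) = (a * a) * (b * c) by intros; ring, hsq]
    ring

end analytic

lemma stmt_11_H2 (n l : ℕ) (P : Polynomial ℝ) (hdeg : P.natDegree = n)
    (S : Finset ℕ) (hSl : S ⊆ Finset.range (l + 1)) (hScard : S.card = n)
    (hroots : P.roots = S.val.map (fun i => (i : ℝ)))
    (hpos : ∀ i ≤ l, 0 ≤ P.eval (i : ℝ)) :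
    (∀ j1 j2, j1 ≤ l → j2 ≤ l → j1 ∉ S → j2 ∉ S →
      Even ((S.filter (fun i => j1 < i ∧ i < j2)).card)) := by
  classical
  intro j1 j2 hj1 hj2 hj1S hj2S
  by_cases hemp : S = ∅
  · subst hemp; simp
  have hroots' : P.roots = Multiset.map (fun i => ((i : ℕ) : ℝ)) S.val := by
    rw [hroots]; simp
  clear hroots
  -- P ≠ 0
  have hP0 : P ≠ 0 := by
    intro h
    rw [h, Polynomial.roots_zero] at hroots'
    have := congrArg Multiset.card hroots'
    simp at this
    exact hemp (Finset.card_eq_zero.1 this.symm)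
  have hc : P.leadingCoeff ≠ 0 := Polynomial.leadingCoeff_ne_zero.2 hP0
  have hcardroots : Multiset.card P.roots = P.natDegree := by
    rw [hroots', Multiset.card_map, hdeg, ← hScard]
    rfl
  have hfact := Polynomial.C_leadingCoeff_mul_prod_multiset_X_sub_C hcardroots
  have heval : ∀ x : ℝ, P.eval x = P.leadingCoeff * ∏ i ∈ S, (x - (i : ℝ)) := by
    intro x
    conv_lhs => rw [← hfact]
    rw [Polynomial.eval_mul, Polynomial.eval_C, hroots', Polynomial.eval_multiset_prod]
    congr 1
    rw [Finset.prod_eq_multiset_prod]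
    congr 1
    simp only [Multiset.map_map]
    apply Multiset.map_congr rfl
    intro a _
    simp
  -- strict positivity at non-roots
  have hstrict : ∀ j : ℕ, j ≤ l → j ∉ S →
      0 < P.leadingCoeff * ∏ i ∈ S, ((j : ℝ) - i) := by
    intro j hjl hjS
    have h1 : 0 ≤ P.leadingCoeff * ∏ i ∈ S, ((j : ℝ) - i) := heval j ▸ hpos j hjl
    have h2 : ∏ i ∈ S, ((j : ℝ) - i) ≠ 0 := by
      apply Finset.prod_ne_zero_iff.2
      intro i hi h
      have hij : (j : ℝ) = i := by linarith
      have hji : j = i := Nat.cast_injective hij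
      exact hjS (hji ▸ hi)
    rcases h1.lt_or_eq with h | h
    · exact h
    · exact absurd h.symm (mul_ne_zero hc h2)
  have key : ∀ j : ℕ, j ≤ l → j ∉ S →
      0 < (-1 : ℝ) ^ ((S.filter (fun i => j < i)).card) * P.leadingCoeff := by
    intro j hjl hjS
    have h1 := keySign S j hjS
    have h2 := hstrict j hjl hjS
    nlinarith [sq_nonneg (∏ i ∈ S, ((j : ℝ) - i))]
  have k1 := key j1 hj1 hj1S
  have k2 := key j2 hj2 hj2S
  have hparity : Even ((S.filter (fun i => j1 < i)).card + (S.filter (fun i => j2 < i)).card) := by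
    by_contra hodd
    rw [Nat.even_iff] at hodd
    have hodd : Odd ((S.filter (fun i => j1 < i)).card + (S.filter (fun i => j2 < i)).card) := by
      rw [Nat.odd_iff]; omega
    have hneg : ((-1 : ℝ) ^ ((S.filter (fun i => j1 < i)).card)) *
        ((-1 : ℝ) ^ ((S.filter (fun i => j2 < i)).card)) = -1 := by
      rw [← pow_add]
      exact Odd.neg_one_pow hodd
    have hmul := mul_pos k1 k2
    have heq2 : ((-1 : ℝ) ^ ((S.filter (fun i => j1 < i)).card) * P.leadingCoeff) *
        ((-1 : ℝ) ^ ((S.filter (fun i => j2 < i)).card) * P.leadingCoeff) =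
        (((-1 : ℝ) ^ ((S.filter (fun i => j1 < i)).card)) *
        ((-1 : ℝ) ^ ((S.filter (fun i => j2 < i)).card))) *
        (P.leadingCoeff * P.leadingCoeff) := by ring
    rw [heq2, hneg] at hmul
    nlinarith [mul_self_nonneg P.leadingCoeff]
  -- now counting
  by_cases hlt : j1 < j2
  · have hsplit : (S.filter (fun i => j1 < i)).card =
        (S.filter (fun i => j1 < i ∧ i < j2)).card + (S.filter (fun i => j2 < i)).card := by
      rw [← Finset.card_union_of_disjoint]
      · congr 1
        ext a
        simp only [Finset.mem_filter, Finset.mem_union]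
        constructor
        · rintro ⟨ha, h⟩
          have : a ≠ j2 := fun he => hj2S (he ▸ ha)
          by_cases h2 : a < j2
          · left; exact ⟨ha, h, h2⟩
          · right; exact ⟨ha, by omega⟩
        · rintro (⟨ha, h, _⟩ | ⟨ha, h⟩)
          · exact ⟨ha, h⟩
          · exact ⟨ha, by omega⟩
      · rw [Finset.disjoint_left]
        rintro a ha hb
        have h1 := (Finset.mem_filter.1 ha).2
        have h2 := (Finset.mem_filter.1 hb).2
        omega
    rw [Nat.even_iff] at hparity ⊢
    omega
  · have : S.filter (fun i => j1 < i ∧ i < j2) = ∅ := by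
      apply Finset.filter_false_of_mem
      intro a _
      omega
    rw [this]; simp

theorem stmt_11 (n l : ℕ) (P : Polynomial ℝ) (hdeg : P.natDegree = n)
    (S : Finset ℕ) (hSl : S ⊆ Finset.range (l + 1)) (hScard : S.card = n)
    (hroots : P.roots = S.val.map (fun i => (i : ℝ)))
    (hpos : ∀ i ≤ l, 0 ≤ P.eval (i : ℝ)) :
    ∃ T A : Finset ℕ,
      S = T.biUnion (fun x => {x, x + 1}) ∪ A ∧
      (∀ x ∈ T, ∀ y ∈ T, x ≠ y → Disjoint ({x, x + 1} : Finset ℕ) {y, y + 1}) ∧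
      Disjoint (T.biUnion (fun x => {x, x + 1})) A ∧
      (Even n → A = ∅ ∨ A = {0, l}) ∧
      (Odd n → A = {0} ∨ A = {l}) := by
  subst hScard
  exact comb S.card l S le_rfl hSl (stmt_11_H2 S.card l P hdeg S hSl rfl hroots hpos)
end

section
/- (Jacobi's formula) Let $C = (c_{i,j})_{0 \le i,j \le n}$ be a real symmetric matrix. For $0 \le k \le i,j$ let $c_{i,j}^k$ denote the determinant of the $(k+1)\times(k+1)$ matrix whose first $k$ rows are $(c_{r,0},\dots,c_{r,k-1},c_{r,j})$ for $r = 0,\dots,k-1$ and last row $(c_{i,0},\dots,c_{i,k-1},c_{i,j})$, with the convention $c_{-1,-1}^{-1} = 1$. If all principal minors $c_{k,k}^k$, $k=0,\dots,n$, are nonzero, then for all real $z_0,\dots,z_n$: $\sum_{i,j=0}^n c_{i,j} z_i z_j = \sum_{k=0}^n \left(\sum_{i=k}^n c_{i,k}^k z_i\right)^2 / (c_{k,k}^k \, c_{k-1,k-1}^{k-1})$. -/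
/-- The bordered determinant `c_{i,j}^k`: the determinant of the `(k+1) × (k+1)`
matrix formed from rows `0, …, k-1, i` and columns `0, …, k-1, j` of `C`. -/
noncomputable def bord (n : ℕ) (C : Matrix (Fin (n + 1)) (Fin (n + 1)) ℝ) (k : ℕ)
    (i j : Fin (n + 1)) : ℝ :=
  (Matrix.of fun r s : Fin (k + 1) =>
    C (if h : (r : ℕ) < k ∧ (r : ℕ) ≤ n then ⟨(r : ℕ), by omega⟩ else i)
      (if h : (s : ℕ) < k ∧ (s : ℕ) ≤ n then ⟨(s : ℕ), by omega⟩ else j)).det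

def finClamp (n k : ℕ) : Fin (n + 1) := ⟨min k n, by omega⟩

/-- The leading principal minor `c_{k,k}^k` of `C`. -/
noncomputable def pMinor (n : ℕ) (C : Matrix (Fin (n + 1)) (Fin (n + 1)) ℝ) (k : ℕ) : ℝ :=
  bord n C k (finClamp n k) (finClamp n k)

/-- `c_{k-1,k-1}^{k-1}`, with the convention `c_{-1,-1}^{-1} = 1`. -/
noncomputable def pMinorPred (n : ℕ) (C : Matrix (Fin (n + 1)) (Fin (n + 1)) ℝ) : ℕ → ℝ
  | 0 => 1
  | k + 1 => pMinor n C k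

/-- Auxiliary: the "column" vector `b_k(i) = c_{i,k}^k`. -/
noncomputable def bb (n : ℕ) (C : Matrix (Fin (n + 1)) (Fin (n + 1)) ℝ) (k : ℕ)
    (i : Fin (n + 1)) : ℝ :=
  bord n C k i (finClamp n k)

lemma finClamp_of_le {n k : ℕ} (hk : k ≤ n) : finClamp n k = ⟨k, by omega⟩ := by
  apply Fin.ext; simp [finClamp]; omega

/-- `b_k(i) = 0` when `i < k` (repeated row). -/
lemma bb_eq_zero (n : ℕ) (C : Matrix (Fin (n + 1)) (Fin (n + 1)) ℝ) {k : ℕ} (hk : k ≤ n)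
    {i : Fin (n + 1)} (hi : (i : ℕ) < k) : bb n C k i = 0 := by
  unfold bb bord
  apply Matrix.det_zero_of_row_eq (i := (⟨(i : ℕ), by omega⟩ : Fin (k + 1)))
    (j := Fin.last k)
  · intro h
    have := congrArg Fin.val h
    simp at this
    omega
  · funext s
    simp only [Matrix.of_apply]
    congr 1
    rw [dif_pos ⟨hi, by omega⟩, dif_neg (by simp)]

/-- `b_k(k) = pMinor k`. -/
lemma bb_self (n : ℕ) (C : Matrix (Fin (n + 1)) (Fin (n + 1)) ℝ) {k : ℕ} (hk : k ≤ n) :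
    bb n C k ⟨k, by omega⟩ = pMinor n C k := by
  unfold bb pMinor
  rw [finClamp_of_le hk]

/-- The top-left `k × k` minor equals `pMinorPred k`. -/
lemma det_topLeft (n : ℕ) (C : Matrix (Fin (n + 1)) (Fin (n + 1)) ℝ) (k : ℕ) (hk : k ≤ n) :
    (Matrix.of fun r s : Fin k =>
      C ⟨(r : ℕ), by omega⟩ ⟨(s : ℕ), by omega⟩).det = pMinorPred n C k := by
  match k, hk with
  | 0, _ => simp [pMinorPred]
  | (m + 1), hk =>
    show _ = pMinor n C m
    unfold pMinor bord
    congr 1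
    ext r s
    simp only [Matrix.of_apply]
    congr 1
    · split_ifs with h
      · rfl
      · apply Fin.ext
        simp [finClamp]
        omega
    · split_ifs with h
      · rfl
      · apply Fin.ext
        simp [finClamp]
        omega

/-- Cofactor expansion of `b_k` along its last row: `b_k(i)` is a fixed linear
combination of the entries of row `i` of `C`, supported on columns `0..k`, with
coefficient `pMinorPred k` at column `k`. -/
lemma exists_a (n : ℕ) (C : Matrix (Fin (n + 1)) (Fin (n + 1)) ℝ) (k : ℕ) (hk : k ≤ n) :
    ∃ a : Fin (n + 1) → ℝ, (∀ s : Fin (n + 1), k < (s : ℕ) → a s = 0) ∧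
      a ⟨k, by omega⟩ = pMinorPred n C k ∧
      ∀ i, bb n C k i = ∑ s, a s * C i s := by
  have hcast : k + 1 ≤ n + 1 := by omega
  set col : Fin (k + 1) → Fin (n + 1) := Fin.castLE hcast with hcol
  set coef : Fin (k + 1) → ℝ := fun j =>
    (-1 : ℝ) ^ ((k : ℕ) + (j : ℕ)) *
      (Matrix.of fun r s : Fin k =>
        C ⟨(r : ℕ), by omega⟩ (col (j.succAbove s))).det with hcoef
  refine ⟨fun t => if h : (t : ℕ) < k + 1 then coef ⟨(t : ℕ), h⟩ else 0, ?_, ?_, ?_⟩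
  · intro s hs
    dsimp only
    rw [dif_neg (by omega)]
  · dsimp only
    rw [dif_pos (by omega)]
    have hlast : (⟨k, by omega⟩ : Fin (k + 1)) = Fin.last k := rfl
    rw [hlast, hcoef]
    simp only [Fin.val_last, Fin.succAbove_last]
    rw [(Even.neg_one_pow ⟨k, rfl⟩ : (-1 : ℝ) ^ (k + k) = 1), one_mul]
    -- remaining: det of top-left k×k block = pMinorPred n C k
    have hconv : (Matrix.of fun r s : Fin k =>
        C ⟨(r : ℕ), by omega⟩ (col (Fin.castSucc s)))
        = Matrix.of fun r s : Fin k => C ⟨(r : ℕ), by omega⟩ ⟨(s : ℕ), by omega⟩ := by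
      rfl
    rw [hconv]
    exact det_topLeft n C k hk
  · intro i
    have hM : bb n C k i = (Matrix.of fun r s : Fin (k + 1) =>
        C (if h : (r : ℕ) < k ∧ (r : ℕ) ≤ n then ⟨(r : ℕ), by omega⟩ else i) (col s)).det := by
      unfold bb bord
      congr 1
      ext r s
      simp only [Matrix.of_apply]
      congr 1
      apply Fin.ext
      split_ifs with h
      · simp [hcol]
      · simp [hcol, finClamp]
        omega
    rw [hM, Matrix.det_succ_row _ (Fin.last k)]
    have hterm : ∀ j : Fin (k + 1),
        (-1 : ℝ) ^ ((Fin.last k : ℕ) + (j : ℕ)) *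
          (Matrix.of fun r s : Fin (k + 1) =>
            C (if h : (r : ℕ) < k ∧ (r : ℕ) ≤ n then ⟨(r : ℕ), by omega⟩ else i) (col s))
            (Fin.last k) j *
          ((Matrix.of fun r s : Fin (k + 1) =>
            C (if h : (r : ℕ) < k ∧ (r : ℕ) ≤ n then ⟨(r : ℕ), by omega⟩ else i) (col s)).submatrix
            (Fin.last k).succAbove j.succAbove).det
        = coef j * C i (col j) := by
      intro j
      have h1 : (Matrix.of fun r s : Fin (k + 1) =>
            C (if h : (r : ℕ) < k ∧ (r : ℕ) ≤ n then ⟨(r : ℕ), by omega⟩ else i) (col s))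
            (Fin.last k) j = C i (col j) := by
        simp only [Matrix.of_apply]
        rw [dif_neg (by simp)]
      have h2 : ((Matrix.of fun r s : Fin (k + 1) =>
            C (if h : (r : ℕ) < k ∧ (r : ℕ) ≤ n then ⟨(r : ℕ), by omega⟩ else i) (col s)).submatrix
            (Fin.last k).succAbove j.succAbove)
          = Matrix.of fun r s : Fin k => C ⟨(r : ℕ), by omega⟩ (col (j.succAbove s)) := by
        ext r s
        simp only [Matrix.submatrix_apply, Matrix.of_apply, Fin.succAbove_last]
        congr 1
        rw [dif_pos (by simp only [Fin.coe_castSucc]; exact ⟨r.isLt, by omega⟩)]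
        apply Fin.ext
        simp
      rw [h1, h2, hcoef, Fin.val_last]
      ring
    rw [Finset.sum_congr rfl fun j _ => hterm j]
    -- reindex from Fin (k+1) to Fin (n+1)
    have hre : ∑ s : Fin (n + 1),
        (fun t : Fin (n + 1) =>
          if h : (t : ℕ) < k + 1 then coef ⟨(t : ℕ), h⟩ else 0) s * C i s
        = ∑ j : Fin (k + 1), coef j * C i (col j) := by
      have hzero : ∀ x ∈ Finset.univ,
          x ∉ Finset.univ.map (Fin.castLEEmb hcast) →
          (fun t : Fin (n + 1) =>
            if h : (t : ℕ) < k + 1 then coef ⟨(t : ℕ), h⟩ else 0) x * C i x = 0 := by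
        intro x _ hx
        dsimp only
        rw [dif_neg, zero_mul]
        intro hxk
        exact hx (by
          simp only [Finset.mem_map, Finset.mem_univ, true_and]
          exact ⟨⟨(x : ℕ), hxk⟩, Fin.ext (by simp)⟩)
      rw [← Finset.sum_subset (Finset.subset_univ _) hzero, Finset.sum_map]
      refine Finset.sum_congr rfl fun j _ => ?_
      simp only [Fin.castLEEmb_apply]
      rw [dif_pos (by simpa using j.isLt)]
      rfl
    exact hre.symm

theorem stmt_12_key (n : ℕ) (C : Matrix (Fin (n + 1)) (Fin (n + 1)) ℝ) (hsymm : C.IsSymm)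
    (hpm : ∀ k ≤ n, pMinor n C k ≠ 0) (i j : Fin (n + 1)) :
    C i j = ∑ k ∈ Finset.range (n + 1),
      bb n C k i * bb n C k j / (pMinor n C k * pMinorPred n C k) := by
  have hP : ∀ k ≤ n, pMinorPred n C k ≠ 0 := by
    intro k hk
    match k with
    | 0 => simp [pMinorPred]
    | m + 1 => exact hpm m (by omega)
  choose a ha0 hak haexp using fun k (hk : k ≤ n) => exists_a n C k hk
  -- orthogonality
  have horth : ∀ m (hm : m ≤ n) k (hk : k ≤ n),
      ∑ s, a m hm s * bb n C k s
        = if m = k then pMinor n C k * pMinorPred n C k else 0 := by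
    have hlt : ∀ m (hm : m ≤ n) k (hk : k ≤ n), m < k →
        ∑ s, a m hm s * bb n C k s = 0 := by
      intro m hm k hk hmk
      apply Finset.sum_eq_zero
      intro s _
      rcases Nat.lt_or_ge m (s : ℕ) with h | h
      · rw [ha0 m hm s h, zero_mul]
      · rw [bb_eq_zero n C hk (by omega), mul_zero]
    intro m hm k hk
    rcases lt_trichotomy m k with hmk | hmk | hmk
    · rw [if_neg (by omega)]
      exact hlt m hm k hk hmk
    · subst hmk
      rw [if_pos rfl]
      rw [Finset.sum_eq_single (⟨m, by omega⟩ : Fin (n + 1))]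
      · rw [hak m hm, bb_self n C hm, mul_comm]
      · intro s _ hs
        have hs' : (s : ℕ) ≠ m := fun h => hs (Fin.ext h)
        rcases Nat.lt_or_ge m (s : ℕ) with h | h
        · rw [ha0 m hm s h, zero_mul]
        · rw [bb_eq_zero n C hm (by omega), mul_zero]
      · intro h
        exact absurd (Finset.mem_univ _) h
    · rw [if_neg (by omega)]
      calc ∑ s, a m hm s * bb n C k s
          = ∑ s, a m hm s * ∑ t, a k hk t * C s t := by
            refine Finset.sum_congr rfl fun s _ => ?_
            rw [haexp k hk s]
        _ = ∑ t, a k hk t * ∑ s, a m hm s * C t s := by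
            simp_rw [Finset.mul_sum]
            rw [Finset.sum_comm]
            refine Finset.sum_congr rfl fun t _ => Finset.sum_congr rfl fun s _ => ?_
            rw [hsymm.apply t s]
            ring
        _ = ∑ t, a k hk t * bb n C m t := by
            refine Finset.sum_congr rfl fun t _ => ?_
            rw [haexp m hm t]
        _ = 0 := by
            apply Finset.sum_eq_zero
            intro t _
            rcases Nat.lt_or_ge k (t : ℕ) with h | h
            · rw [ha0 k hk t h, zero_mul]
            · rw [bb_eq_zero n C hm (by omega), mul_zero]
  -- the residual vector
  set w : Fin (n + 1) → ℝ := fun s => C i s - ∑ k ∈ Finset.range (n + 1),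
      bb n C k i * bb n C k s / (pMinor n C k * pMinorPred n C k) with hw
  have hwa : ∀ m (hm : m ≤ n), ∑ s, a m hm s * w s = 0 := by
    intro m hm
    have h1 : ∑ s, a m hm s * C i s = bb n C m i := (haexp m hm i).symm
    have h2 : ∑ s, a m hm s * (∑ k ∈ Finset.range (n + 1),
        bb n C k i * bb n C k s / (pMinor n C k * pMinorPred n C k)) = bb n C m i := by
      calc ∑ s, a m hm s * (∑ k ∈ Finset.range (n + 1),
              bb n C k i * bb n C k s / (pMinor n C k * pMinorPred n C k))
          = ∑ k ∈ Finset.range (n + 1), (bb n C k i / (pMinor n C k * pMinorPred n C k)) *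
              ∑ s, a m hm s * bb n C k s := by
            simp_rw [Finset.mul_sum]
            rw [Finset.sum_comm]
            refine Finset.sum_congr rfl fun k _ => Finset.sum_congr rfl fun s _ => ?_
            ring
        _ = ∑ k ∈ Finset.range (n + 1), (bb n C k i / (pMinor n C k * pMinorPred n C k)) *
              (if m = k then pMinor n C k * pMinorPred n C k else 0) := by
            refine Finset.sum_congr rfl fun k hkmem => ?_
            rw [horth m hm k (Nat.lt_succ_iff.mp (Finset.mem_range.mp hkmem))]
        _ = bb n C m i := by
            simp only [mul_ite, mul_zero]
            rw [Finset.sum_ite_eq]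
            rw [if_pos (Finset.mem_range.mpr (by omega))]
            rw [div_mul_cancel₀]
            exact mul_ne_zero (hpm m hm) (hP m hm)
    simp only [hw, mul_sub, Finset.sum_sub_distrib, h1, h2, sub_self]
  have hw0 : ∀ s : Fin (n + 1), w s = 0 := by
    have H : ∀ N : ℕ, ∀ s : Fin (n + 1), (s : ℕ) < N → w s = 0 := by
      intro N
      induction N with
      | zero => intro s h; omega
      | succ N ih =>
        intro s hs
        rcases Nat.lt_or_ge (s : ℕ) N with h | h
        · exact ih s h
        have hsn : (s : ℕ) ≤ n := by omega
        have h0 := hwa (s : ℕ) hsn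
        rw [Finset.sum_eq_single s] at h0
        · have hA : a (s : ℕ) hsn s = pMinorPred n C (s : ℕ) := by
            have := hak (s : ℕ) hsn
            rwa [show (⟨(s : ℕ), by omega⟩ : Fin (n + 1)) = s from Fin.ext rfl] at this
          rw [hA] at h0
          exact (mul_eq_zero.mp h0).resolve_left (hP (s : ℕ) hsn)
        · intro t _ hts
          have hts' : (t : ℕ) ≠ (s : ℕ) := fun hh => hts (Fin.ext hh)
          rcases Nat.lt_or_ge (s : ℕ) (t : ℕ) with h' | h'
          · rw [ha0 (s : ℕ) hsn t h', zero_mul]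
          · rw [ih t (by omega), mul_zero]
        · intro h
          exact absurd (Finset.mem_univ _) h
    intro s
    exact H (n + 1) s s.isLt
  have := hw0 j
  simp only [hw] at this
  linarith

/-- Jacobi's formula. -/
theorem stmt_12 (n : ℕ) (C : Matrix (Fin (n + 1)) (Fin (n + 1)) ℝ) (hsymm : C.IsSymm)
    (hpm : ∀ k ≤ n, pMinor n C k ≠ 0) (z : Fin (n + 1) → ℝ) :
    ∑ i, ∑ j, C i j * z i * z j
      = ∑ k ∈ Finset.range (n + 1),
          (∑ i ∈ Finset.univ.filter (fun i : Fin (n + 1) => k ≤ (i : ℕ)),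
            bord n C k i (finClamp n k) * z i) ^ 2
          / (pMinor n C k * pMinorPred n C k) := by
  calc ∑ i, ∑ j, C i j * z i * z j
      = ∑ k ∈ Finset.range (n + 1), ∑ i, ∑ j,
          (bb n C k i * z i) * (bb n C k j * z j) / (pMinor n C k * pMinorPred n C k) := by
        have hstep : (∑ i, ∑ j, C i j * z i * z j) = ∑ i, ∑ j, ∑ k ∈ Finset.range (n + 1),
            (bb n C k i * z i) * (bb n C k j * z j) / (pMinor n C k * pMinorPred n C k) := by
          refine Finset.sum_congr rfl fun i _ => Finset.sum_congr rfl fun j _ => ?_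
          rw [stmt_12_key n C hsymm hpm i j, Finset.sum_mul, Finset.sum_mul]
          refine Finset.sum_congr rfl fun k _ => ?_
          ring
        rw [hstep]
        rw [show (∑ i, ∑ j, ∑ k ∈ Finset.range (n + 1),
              (bb n C k i * z i) * (bb n C k j * z j) / (pMinor n C k * pMinorPred n C k))
            = ∑ i, ∑ k ∈ Finset.range (n + 1), ∑ j,
              (bb n C k i * z i) * (bb n C k j * z j) / (pMinor n C k * pMinorPred n C k)
          from Finset.sum_congr rfl fun i _ => Finset.sum_comm]
        exact Finset.sum_comm
    _ = ∑ k ∈ Finset.range (n + 1),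
          (∑ i, bb n C k i * z i) ^ 2 / (pMinor n C k * pMinorPred n C k) := by
        refine Finset.sum_congr rfl fun k _ => ?_
        rw [sq]
        rw [Finset.sum_mul_sum, Finset.sum_div]
        refine Finset.sum_congr rfl fun i _ => ?_
        rw [Finset.sum_div]
    _ = ∑ k ∈ Finset.range (n + 1),
          (∑ i ∈ Finset.univ.filter (fun i : Fin (n + 1) => k ≤ (i : ℕ)),
            bord n C k i (finClamp n k) * z i) ^ 2
          / (pMinor n C k * pMinorPred n C k) := by
        refine Finset.sum_congr rfl fun k hk => ?_
        have hkn : k ≤ n := Nat.lt_succ_iff.mp (Finset.mem_range.mp hk)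
        have hfil : ∑ i ∈ Finset.univ.filter (fun i : Fin (n + 1) => k ≤ (i : ℕ)),
            bord n C k i (finClamp n k) * z i = ∑ i, bb n C k i * z i := by
          apply Finset.sum_filter_of_ne
          intro i _ hne
          by_contra hik
          exact hne (by rw [show bord n C k i (finClamp n k) = bb n C k i from rfl,
            bb_eq_zero n C hkn (by omega), zero_mul])
        rw [hfil]
end

section
/- (Special case of Sylvester's identity) With the notation $c_{i,j}^k$ for bordered determinants of a matrix $C$ as above (and $c_{i,j}^{k+1} := 0$ when $k = \min(i,j)$), for all $0 \le k \le i,j$: $c_{k,k}^k c_{i,j}^k - c_{i,k}^k c_{k,j}^k = c_{k-1,k-1}^{k-1} c_{i,j}^{k+1}$. -/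
/-!
Put `A = C[0..k-1, 0..k-1]` and write the matrix of `c_{i,j}^{k+1}` as `M = [[A, B], [C', D]]`
with `D` of size `2 × 2`. Multiplying `M` on the left by `[[1, 0], [-C' adj A, det A • 1]]`
makes it block triangular, so `det A ^ 2 * det M = det A * det (det A • D - C' adj A B)`; the
same computation with a single border row and column identifies the entries of that `2 × 2`
matrix with the minors `c_{·,·}^k`. Cancelling `det A` proves the identity when `det A` is a
non-zero-divisor; in general, replace `A` by `X • 1 + A` over `R[X]`, whose determinant is the
monic polynomial `charpoly (-A)`, and evaluate at `X = 0`. When `k = min i j` the matrix of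
`c_{i,j}^{k+1}` repeats row or column `k`.
-/

open Polynomial

namespace Matrix

variable {R : Type*} [CommRing R] {m n : Type*} [Fintype m] [DecidableEq m]

theorem det_pow_mul_det_fromBlocks [Fintype n] [DecidableEq n] (A : Matrix m m R)
    (B : Matrix m n R) (C : Matrix n m R) (D : Matrix n n R) :
    A.det ^ Fintype.card n * (fromBlocks A B C D).det
      = A.det * (A.det • D - C * A.adjugate * B).det := by
  have hmul : fromBlocks 1 0 (-(C * A.adjugate)) (A.det • 1) * fromBlocks A B C D
      = fromBlocks A B 0 (A.det • D - C * A.adjugate * B) := by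
    rw [fromBlocks_multiply]
    congr 1 <;> simp only [Matrix.one_mul, Matrix.zero_mul, add_zero, Matrix.neg_mul,
      Matrix.mul_assoc, adjugate_mul, Matrix.mul_smul, Matrix.mul_one, Matrix.smul_mul,
      neg_add_cancel]
    abel
  have := congrArg det hmul
  rwa [det_mul, det_fromBlocks_zero₁₂, det_fromBlocks_zero₂₁, det_one, one_mul, det_smul,
    det_one, mul_one] at this

theorem charmatrix_neg_map_eval_zero (A : Matrix m m R) : (charmatrix (-A)).map (eval 0) = A := by
  ext i j
  by_cases h : i = j
  · subst h
    simp [charmatrix_apply_eq]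
  · simp [charmatrix_apply_ne _ _ _ h]

def borderSubmatrix {α : Type*} (M : Matrix (m ⊕ n) (m ⊕ n) α) (x y : n) :
    Matrix (m ⊕ Fin 1) (m ⊕ Fin 1) α :=
  M.submatrix (Sum.map id fun _ => x) (Sum.map id fun _ => y)

theorem det_mul_det_borderSubmatrix (M : Matrix (m ⊕ n) (m ⊕ n) R) (x y : n) :
    M.toBlocks₁₁.det * (M.borderSubmatrix x y).det
      = M.toBlocks₁₁.det * (M.toBlocks₁₁.det • M.toBlocks₂₂
          - M.toBlocks₂₁ * M.toBlocks₁₁.adjugate * M.toBlocks₁₂) x y := by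
  have hblocks : M.borderSubmatrix x y = fromBlocks M.toBlocks₁₁
      (M.toBlocks₁₂.submatrix id fun _ : Fin 1 => y) (M.toBlocks₂₁.submatrix (fun _ => x) id)
      (M.toBlocks₂₂.submatrix (fun _ => x) fun _ => y) := by
    ext (i | i) (j | j) <;> rfl
  have := det_pow_mul_det_fromBlocks M.toBlocks₁₁
    (M.toBlocks₁₂.submatrix id fun _ : Fin 1 => y) (M.toBlocks₂₁.submatrix (fun _ => x) id)
    (M.toBlocks₂₂.submatrix (fun _ => x) fun _ => y)
  rw [Fintype.card_unique, pow_one, det_fin_one, ← hblocks] at this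
  simpa [Matrix.mul_apply] using this

theorem det_toBlocks₁₁_mul_det_of_isLeftRegular (M : Matrix (m ⊕ Fin 2) (m ⊕ Fin 2) R)
    (hA : IsLeftRegular M.toBlocks₁₁.det) :
    M.toBlocks₁₁.det * M.det
      = (M.borderSubmatrix 0 0).det * (M.borderSubmatrix 1 1).det
        - (M.borderSubmatrix 0 1).det * (M.borderSubmatrix 1 0).det := by
  have hborder (x y : Fin 2) := hA (det_mul_det_borderSubmatrix M x y)
  have hschur := det_pow_mul_det_fromBlocks M.toBlocks₁₁ M.toBlocks₁₂ M.toBlocks₂₁ M.toBlocks₂₂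
  rw [fromBlocks_toBlocks, Fintype.card_fin, sq, mul_assoc, det_fin_two] at hschur
  simp only [hborder]
  exact hA hschur

theorem det_toBlocks₁₁_mul_det (M : Matrix (m ⊕ Fin 2) (m ⊕ Fin 2) R) :
    M.toBlocks₁₁.det * M.det
      = (M.borderSubmatrix 0 0).det * (M.borderSubmatrix 1 1).det
        - (M.borderSubmatrix 0 1).det * (M.borderSubmatrix 1 0).det := by
  set M' : Matrix (m ⊕ Fin 2) (m ⊕ Fin 2) R[X] := fromBlocks (charmatrix (-M.toBlocks₁₁))
    (M.toBlocks₁₂.map C) (M.toBlocks₂₁.map C) (M.toBlocks₂₂.map C)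
  have hM' : M'.map (eval 0) = M := by
    simp only [M', fromBlocks_map, charmatrix_neg_map_eval_zero, Matrix.map_map,
      Function.comp_def, eval_C, Matrix.map_id', fromBlocks_toBlocks]
  have hreg : IsLeftRegular M'.toBlocks₁₁.det := by
    rw [toBlocks_fromBlocks₁₁]
    exact (charpoly_monic _).isRegular.left
  have := congrArg (eval 0) (det_toBlocks₁₁_mul_det_of_isLeftRegular M' hreg)
  simp only [eval_mul, eval_sub, ← coe_evalRingHom, RingHom.map_det,
    RingHom.mapMatrix_apply] at this
  rw [← hM']
  exact this

theorem det_submatrix_mul_det_submatrix_sumElim {α β : Type*} (N : Matrix α β R) (f : m → α)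
    (g : m → β) (r : Fin 2 → α) (c : Fin 2 → β) :
    (N.submatrix f g).det * (N.submatrix (Sum.elim f r) (Sum.elim g c)).det =
      (N.submatrix (Sum.elim f fun _ : Fin 1 => r 0) (Sum.elim g fun _ : Fin 1 => c 0)).det *
        (N.submatrix (Sum.elim f fun _ : Fin 1 => r 1) (Sum.elim g fun _ : Fin 1 => c 1)).det -
      (N.submatrix (Sum.elim f fun _ : Fin 1 => r 0) (Sum.elim g fun _ : Fin 1 => c 1)).det *
        (N.submatrix (Sum.elim f fun _ : Fin 1 => r 1) (Sum.elim g fun _ : Fin 1 => c 0)).det := by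
  have hborder (x y : Fin 2) : (N.submatrix (Sum.elim f r) (Sum.elim g c)).borderSubmatrix x y
      = N.submatrix (Sum.elim f fun _ : Fin 1 => r x) (Sum.elim g fun _ : Fin 1 => c y) := by
    ext (a | a) (b | b) <;> rfl
  have hcorner : (N.submatrix (Sum.elim f r) (Sum.elim g c)).toBlocks₁₁ = N.submatrix f g := rfl
  simpa only [hcorner, hborder] using
    det_toBlocks₁₁_mul_det (N.submatrix (Sum.elim f r) (Sum.elim g c))

end Matrix

open Matrix

theorem bord_eq_det_submatrix {n k : ℕ} (hk : k ≤ n)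
    (C : Matrix (Fin (n + 1)) (Fin (n + 1)) ℝ) (i j : Fin (n + 1)) :
    bord n C k i j
      = (C.submatrix (Sum.elim (Fin.castLE (Nat.le_succ_of_le hk)) fun _ : Fin 1 => i)
          (Sum.elim (Fin.castLE (Nat.le_succ_of_le hk)) fun _ : Fin 1 => j)).det := by
  have hle (r : Fin k) : (r : ℕ) ≤ n := by omega
  rw [bord, ← det_submatrix_equiv_self finSumFinEquiv]
  congr 1
  ext (r | r) (s | s) <;> simp [Fin.castLE, hle]

theorem bord_succ_eq_det_submatrix {n k : ℕ} (hk : k ≤ n)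
    (C : Matrix (Fin (n + 1)) (Fin (n + 1)) ℝ) (i j : Fin (n + 1)) :
    bord n C (k + 1) i j
      = (C.submatrix (Sum.elim (Fin.castLE (Nat.le_succ_of_le hk)) ![finClamp n k, i])
          (Sum.elim (Fin.castLE (Nat.le_succ_of_le hk)) ![finClamp n k, j])).det := by
  have hle (r : Fin k) : (r : ℕ) ≤ n := by omega
  have hclamp : finClamp n k = ⟨k, by omega⟩ := Fin.ext (min_eq_left hk)
  rw [bord, ← det_submatrix_equiv_self (finSumFinEquiv : Fin k ⊕ Fin 2 ≃ _)]
  congr 1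
  ext (r | r) (s | s)
  all_goals (try fin_cases r) <;> (try fin_cases s) <;> simp [Fin.castLE, hle, hk, hclamp]

theorem pMinorPred_eq_det_submatrix {n k : ℕ} (hk : k ≤ n)
    (C : Matrix (Fin (n + 1)) (Fin (n + 1)) ℝ) :
    pMinorPred n C k
      = (C.submatrix (Fin.castLE (Nat.le_succ_of_le hk))
          (Fin.castLE (Nat.le_succ_of_le hk))).det := by
  cases k with
  | zero => simp [pMinorPred]
  | succ k =>
    have hidx : (fun r : Fin (k + 1) =>
        if h : (r : ℕ) < k ∧ (r : ℕ) ≤ n then (⟨r, by omega⟩ : Fin (n + 1)) else finClamp n k)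
        = Fin.castLE (Nat.le_succ_of_le hk) := by
      funext r
      ext
      split_ifs with h
      · rfl
      · simp only [finClamp, Fin.val_castLE]; omega
    exact congrArg det (congrArg₂ C.submatrix hidx hidx)

theorem bord_succ_eq_zero_of_val_left {n k : ℕ} (hk : k ≤ n)
    (C : Matrix (Fin (n + 1)) (Fin (n + 1)) ℝ) (i j : Fin (n + 1)) (hi : (i : ℕ) = k) :
    bord n C (k + 1) i j = 0 := by
  have : i = finClamp n k := Fin.ext (by simp [finClamp]; omega)
  rw [bord_succ_eq_det_submatrix hk, this]
  exact det_zero_of_row_eq (i := Sum.inr 0) (j := Sum.inr 1) (by simp) (by ext; simp)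

theorem bord_succ_eq_zero_of_val_right {n k : ℕ} (hk : k ≤ n)
    (C : Matrix (Fin (n + 1)) (Fin (n + 1)) ℝ) (i j : Fin (n + 1)) (hj : (j : ℕ) = k) :
    bord n C (k + 1) i j = 0 := by
  have : j = finClamp n k := Fin.ext (by simp [finClamp]; omega)
  rw [bord_succ_eq_det_submatrix hk, this]
  exact det_zero_of_column_eq (i := Sum.inr 0) (j := Sum.inr 1) (by simp) (by intro; simp)

theorem pMinor_mul_bord_sub_bord_mul_bord {n k : ℕ} (hk : k ≤ n)
    (C : Matrix (Fin (n + 1)) (Fin (n + 1)) ℝ) (i j : Fin (n + 1)) :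
    pMinor n C k * bord n C k i j - bord n C k i (finClamp n k) * bord n C k (finClamp n k) j
      = pMinorPred n C k * bord n C (k + 1) i j := by
  rw [pMinor, bord_eq_det_submatrix hk, bord_eq_det_submatrix hk, bord_eq_det_submatrix hk,
    bord_eq_det_submatrix hk, bord_succ_eq_det_submatrix hk, pMinorPred_eq_det_submatrix hk,
    det_submatrix_mul_det_submatrix_sumElim]
  simp only [Fin.isValue, cons_val_zero, cons_val_one, cons_val_fin_one]
  ring

theorem stmt_13_general (n : ℕ) (C : Matrix (Fin (n + 1)) (Fin (n + 1)) ℝ)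
    (k : ℕ) (hk : k ≤ n) (i j : Fin (n + 1)) :
    pMinor n C k * bord n C k i j - bord n C k i (finClamp n k) * bord n C k (finClamp n k) j
      = pMinorPred n C k *
          (if k = min (i : ℕ) (j : ℕ) then 0 else bord n C (k + 1) i j) := by
  rw [pMinor_mul_bord_sub_bord_mul_bord hk]
  split_ifs with hmin
  · rcases (show (i : ℕ) = k ∨ (j : ℕ) = k by omega) with hi | hj
    · rw [bord_succ_eq_zero_of_val_left hk C i j hi]
    · rw [bord_succ_eq_zero_of_val_right hk C i j hj]
  · rfl

/-- A special case of Sylvester's determinant identity. -/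
theorem stmt_13 (n : ℕ) (C : Matrix (Fin (n + 1)) (Fin (n + 1)) ℝ)
    (k : ℕ) (hk : k ≤ n) (i j : Fin (n + 1)) (hki : k ≤ (i : ℕ)) (hkj : k ≤ (j : ℕ)) :
    pMinor n C k * bord n C k i j - bord n C k i (finClamp n k) * bord n C k (finClamp n k) j
      = pMinorPred n C k *
          (if k = min (i : ℕ) (j : ℕ) then 0 else bord n C (k + 1) i j) :=
  stmt_13_general n C k hk i j
end

section
/- Fix integers $0 \le k \le n$, a real number $a$, and an integer $j \ge 0$. For every monic polynomial $P$ of degree $j$ there exists a monic polynomial $Q$ of degree $j$ (in the variable $k$) such that $\sum_{i} P(i)\, a^{i-k} \binom{n-k}{i-k} = Q(k)\,(1+a)^{n-k-j}$. -/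
open Polynomial Finset

theorem core16 (n : ℕ) (a : ℝ) (ha : 0 < a) (i : ℕ) :
    ∃ Q : Polynomial ℝ, Q.natDegree ≤ i ∧ Q.coeff i = 1 ∧
      ∀ k ≤ n,
        ∑ m ∈ Finset.range (n - k + 1),
            ((k + m : ℕ) : ℝ) ^ i * a ^ m * ((n - k).choose m : ℝ)
          = Q.eval (k : ℝ) * (1 + a) ^ ((n : ℤ) - k - i) := by
  have h1a : (0:ℝ) < 1 + a := by linarith
  have h1a' : (1+a : ℝ) ≠ 0 := ne_of_gt h1a
  induction i with
  | zero =>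
    refine ⟨1, by simp, by simp, ?_⟩
    intro k hk
    have hz : ((n : ℤ) - k - ((0:ℕ):ℤ)) = ((n - k : ℕ) : ℤ) := by
      push_cast [Nat.cast_sub hk]; ring
    rw [hz, zpow_natCast]
    have := add_pow a 1 (n - k)
    simp only [one_pow, mul_one] at this
    simp only [pow_zero, one_mul, eval_one]
    rw [add_comm (1:ℝ) a, ← this]
  | succ i ih =>
    obtain ⟨Q', hd, hc, he⟩ := ih
    have hQ'deg : Q'.natDegree = i :=
      le_antisymm hd (le_natDegree_of_ne_zero (by rw [hc]; exact one_ne_zero))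
    have hXdeg : (X + 1 : Polynomial ℝ).natDegree = 1 := by
      simpa using natDegree_X_add_C (1 : ℝ)
    have hcompdeg : (Q'.comp (X + 1)).natDegree = i := by
      rw [natDegree_comp, hXdeg, hQ'deg, mul_one]
    have hcomplead : (Q'.comp (X + 1)).coeff i = 1 := by
      have h := leadingCoeff_comp (p := Q') (q := X + 1) (by rw [hXdeg]; exact one_ne_zero)
      have hm : (X + 1 : Polynomial ℝ).leadingCoeff = 1 := by
        simpa using (monic_X_add_C (1 : ℝ)).leadingCoeff
      have hQl : Q'.leadingCoeff = 1 := by rw [leadingCoeff, hQ'deg, hc]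
      have h2 : (Q'.comp (X+1)).leadingCoeff = 1 := by
        rw [h, hm, one_pow, mul_one, hQl]
      rw [← hcompdeg]; exact h2
    refine ⟨C a * ((C (n:ℝ) - X) * Q'.comp (X + 1)) + C (1+a) * (X * Q'), ?_, ?_, ?_⟩
    · apply natDegree_add_le_of_degree_le
      · refine (natDegree_mul_le).trans ?_
        simp only [natDegree_C, zero_add]
        refine (natDegree_mul_le).trans ?_
        have h1 : (C (n:ℝ) - X).natDegree ≤ 1 :=
          (natDegree_sub_le _ _).trans (by simp)
        omega
      · refine (natDegree_mul_le).trans ?_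
        simp only [natDegree_C, zero_add]
        refine (natDegree_mul_le).trans ?_
        simp [hQ'deg]
        omega
    · have hz : (Q'.comp (X+1)).coeff (i+1) = 0 :=
        coeff_eq_zero_of_natDegree_lt (by omega)
      rw [coeff_add, coeff_C_mul, coeff_C_mul, coeff_X_mul, sub_mul, coeff_sub,
        coeff_C_mul, coeff_X_mul, hz, hcomplead, hc]
      ring
    · intro k hk
      have hzpow : (1+a) ^ ((n:ℤ) - k - i) = (1+a) ^ ((n:ℤ) - k - (i+1:ℕ)) * (1+a) := by
        rw [← zpow_add_one₀ h1a']; congr 1; push_cast; ring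
      have hsplit : ∑ m ∈ range (n-k+1), ((k+m:ℕ):ℝ)^(i+1) * a^m * ((n-k).choose m : ℝ)
          = (k:ℝ) * ∑ m ∈ range (n-k+1), ((k+m:ℕ):ℝ)^i * a^m * ((n-k).choose m : ℝ)
            + ∑ m ∈ range (n-k+1), (m:ℝ) * (((k+m:ℕ):ℝ)^i * a^m * ((n-k).choose m : ℝ)) := by
        rw [Finset.mul_sum, ← Finset.sum_add_distrib]
        refine Finset.sum_congr rfl fun m _ => ?_
        push_cast
        ring
      have hA : ∑ m ∈ range (n-k+1), (m:ℝ) * (((k+m:ℕ):ℝ)^i * a^m * ((n-k).choose m : ℝ))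
          = a * (((n:ℝ) - k) * Q'.eval ((k:ℝ)+1)) * (1+a) ^ ((n:ℤ) - k - (i+1:ℕ)) := by
        rcases eq_or_lt_of_le hk with rfl | hkn
        · simp [Nat.sub_self]
        · have hk1 : k + 1 ≤ n := hkn
          have hM : n - k = (n - (k+1)) + 1 := by omega
          set M := n - (k+1) with hMdef
          rw [hM, Finset.sum_range_succ']
          simp only [Nat.cast_zero, zero_mul, add_zero]
          have hterm : ∀ x : ℕ, (((x+1):ℕ):ℝ) * ((((k+(x+1)):ℕ):ℝ)^i * a^(x+1) * (((M+1).choose (x+1)):ℝ))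
              = ((M:ℝ)+1) * a * ((((k+1)+x:ℕ):ℝ)^i * a^x * ((M.choose x):ℝ)) := by
            intro x
            have hch : ((M+1).choose (x+1)) * (x+1) = (M+1) * (M.choose x) := by
              rw [← Nat.add_one_mul_choose_eq]
            have hchR : (((M+1).choose (x+1)):ℝ) * ((x:ℝ)+1) = ((M:ℝ)+1) * ((M.choose x):ℝ) := by
              exact_mod_cast hch
            push_cast
            linear_combination ((k:ℝ)+x+1)^i * a^x * a * hchR
          rw [Finset.sum_congr rfl fun x _ => hterm x, ← Finset.mul_sum, he (k+1) hk1]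
          have h1 : ((M:ℝ)) = (n:ℝ) - (k:ℝ) - 1 := by
            rw [hMdef]; push_cast [Nat.cast_sub hk1]; ring
          have h2 : ((n:ℤ) - ((k+1:ℕ):ℤ) - (i:ℤ)) = ((n:ℤ) - k - ((i+1:ℕ):ℤ)) := by
            push_cast; ring
          rw [h2]
          push_cast
          rw [h1]
          ring
      rw [hsplit, he k hk, hA, hzpow]
      simp only [eval_add, eval_mul, eval_sub, eval_C, eval_X, eval_comp, eval_one]
      push_cast
      ring
theorem stmt_16 (n j : ℕ) (a : ℝ) (ha : 0 < a)
    (P : Polynomial ℝ) (hPmonic : P.Monic) (hPdeg : P.natDegree = j) :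
    ∃ Q : Polynomial ℝ, Q.Monic ∧ Q.natDegree = j ∧
      ∀ k ≤ n,
        ∑ m ∈ Finset.range (n - k + 1),
            P.eval (((k + m : ℕ) : ℝ)) * a ^ m * ((n - k).choose m : ℝ)
          = Q.eval (k : ℝ) * (1 + a) ^ ((n : ℤ) - k - j) := by
  have h1a : (0:ℝ) < 1 + a := by linarith
  have h1a' : (1+a : ℝ) ≠ 0 := ne_of_gt h1a
  choose Qf hdeg hcoeff heval using core16 n a ha
  set Q : Polynomial ℝ :=
    ∑ i ∈ Finset.range (j+1), Polynomial.C (P.coeff i * (1+a) ^ ((j:ℤ) - i)) * Qf i with hQ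
  have hQcoeff : Q.coeff j = 1 := by
    rw [hQ, Polynomial.finset_sum_coeff]
    rw [Finset.sum_eq_single j]
    · rw [Polynomial.coeff_C_mul, hcoeff j, sub_self, zpow_zero, mul_one, mul_one]
      rw [← hPdeg]; exact hPmonic.coeff_natDegree
    · intro i hi hne
      have hij : i < j := by
        have := Finset.mem_range.mp hi; omega
      rw [Polynomial.coeff_C_mul,
        Polynomial.coeff_eq_zero_of_natDegree_lt (lt_of_le_of_lt (hdeg i) hij), mul_zero]
    · intro h; exact absurd (Finset.self_mem_range_succ j) h
  have hQle : Q.natDegree ≤ j := by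
    rw [hQ]
    refine Polynomial.natDegree_sum_le_of_forall_le _ _ fun i hi => ?_
    refine (Polynomial.natDegree_C_mul_le _ _).trans ((hdeg i).trans ?_)
    have := Finset.mem_range.mp hi; omega
  have hQdeg : Q.natDegree = j :=
    le_antisymm hQle (Polynomial.le_natDegree_of_ne_zero (by rw [hQcoeff]; exact one_ne_zero))
  refine ⟨Q, ?_, hQdeg, ?_⟩
  · rw [Polynomial.Monic, Polynomial.leadingCoeff, hQdeg, hQcoeff]
  · intro k hk
    have hPeval : ∀ x : ℝ, P.eval x = ∑ i ∈ Finset.range (j+1), P.coeff i * x ^ i := by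
      intro x
      exact Polynomial.eval_eq_sum_range' (by omega) x
    calc ∑ m ∈ Finset.range (n-k+1), P.eval ((k+m:ℕ):ℝ) * a^m * ((n-k).choose m :ℝ)
        = ∑ m ∈ Finset.range (n-k+1), ∑ i ∈ Finset.range (j+1),
            P.coeff i * (((k+m:ℕ):ℝ)^i * a^m * ((n-k).choose m :ℝ)) := by
          refine Finset.sum_congr rfl fun m _ => ?_
          rw [hPeval, Finset.sum_mul, Finset.sum_mul]
          exact Finset.sum_congr rfl fun i _ => by ring
      _ = ∑ i ∈ Finset.range (j+1), P.coeff i *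
            ∑ m ∈ Finset.range (n-k+1), ((k+m:ℕ):ℝ)^i * a^m * ((n-k).choose m :ℝ) := by
          rw [Finset.sum_comm]
          exact Finset.sum_congr rfl fun i _ => by rw [Finset.mul_sum]
      _ = ∑ i ∈ Finset.range (j+1), P.coeff i *
            ((Qf i).eval (k:ℝ) * (1+a)^((n:ℤ)-k-i)) :=
          Finset.sum_congr rfl fun i _ => by rw [heval i k hk]
      _ = (∑ i ∈ Finset.range (j+1),
            (P.coeff i * (1+a)^((j:ℤ)-i)) * (Qf i).eval (k:ℝ)) * (1+a)^((n:ℤ)-k-j) := by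
          rw [Finset.sum_mul]
          refine Finset.sum_congr rfl fun i _ => ?_
          rw [show ((n:ℤ)-k-i) = ((j:ℤ)-i) + ((n:ℤ)-k-j) by ring, zpow_add₀ h1a']
          ring
      _ = Q.eval (k:ℝ) * (1+a)^((n:ℤ)-k-j) := by
          rw [hQ, Polynomial.eval_finset_sum]
          simp only [Polynomial.eval_mul, Polynomial.eval_C]
end

section
/- For $\varepsilon \in [0,1]$ define $\tilde{c}(\varepsilon) := \sup\{c > 0 : \inf_{y \in \mathbb{R}} e^{y^2/c}(1 - \varepsilon \sin^2 y) = 1\}$. Then for all $\varepsilon \in (0,1)$: $-1/\ln(1-\varepsilon) \le \tilde{c}(\varepsilon) \le \min\{-\pi^2/(4\ln(1-\varepsilon)),\ 1/\varepsilon\}$. -/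
/-- `c̃(ε)`, the supremum of those `c > 0` for which
`inf_y e^{y²/c}(1 - ε sin² y) = 1`. -/
noncomputable def ctilde (ε : ℝ) : ℝ :=
  sSup {c : ℝ | 0 < c ∧
    sInf (Set.range fun y : ℝ => Real.exp (y ^ 2 / c) * (1 - ε * Real.sin y ^ 2)) = 1}

/-!
Writing `l = log (1 - ε) < 0`, Bernoulli's inequality `(1 - ε) ^ α ≤ 1 - ε α` for `α = sin² y ∈ [0, 1]`
together with `sin² y ≤ y²` gives `1 - ε sin² y ≥ e^{l sin² y} ≥ e^{l y²}`, so `c = -1 / l` is admissible.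
Conversely, an admissible `c` must satisfy the defining inequality at `y = π / 2`, which gives the
bound `-π² / (4 l)`, and near `y = 0`, where `sin y / y → 1` and `e^a (1 - a) ≤ 1` force `ε c ≤ 1`.
-/

open Real Set Filter Topology

/-- The set in `ctilde`: the infimum there is the value `1` at `y = 0` exactly when no value is
below `1`. -/
def admissible (ε : ℝ) : Set ℝ :=
  {c | 0 < c ∧ ∀ y : ℝ, 1 ≤ exp (y ^ 2 / c) * (1 - ε * sin y ^ 2)}

theorem le_of_sInf_range_eq {ι : Type*} {f : ι → ℝ} {m : ℝ} (hm : m ≠ 0)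
    (h : sInf (range f) = m) (i : ι) : m ≤ f i := by
  have hbdd : BddBelow (range f) := by
    by_contra hb
    exact hm (h.symm.trans (Real.sInf_of_not_bddBelow hb))
  exact h ▸ csInf_le hbdd (mem_range_self i)

theorem sInf_range_eq_iff {ι : Type*} {f : ι → ℝ} {m : ℝ} (hm : m ≠ 0) {i₀ : ι}
    (h₀ : f i₀ = m) : sInf (range f) = m ↔ ∀ i, m ≤ f i :=
  ⟨le_of_sInf_range_eq hm, fun h => IsLeast.csInf_eq ⟨⟨i₀, h₀⟩, by rintro _ ⟨i, rfl⟩; exact h i⟩⟩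

theorem ctilde_eq_sSup_admissible (ε : ℝ) : ctilde ε = sSup (admissible ε) := by
  unfold ctilde admissible
  congr! 4 with c
  exact sInf_range_eq_iff one_ne_zero (i₀ := 0) (by simp)

theorem exp_sq_mul_log_one_sub_le {ε : ℝ} (hε0 : 0 ≤ ε) (hε1 : ε < 1) (y : ℝ) :
    exp (y ^ 2 * log (1 - ε)) ≤ 1 - ε * sin y ^ 2 := by
  have hlog : log (1 - ε) ≤ 0 := log_nonpos (by linarith) (by linarith)
  have bernoulli : (1 + -ε) ^ sin y ^ 2 ≤ 1 + sin y ^ 2 * -ε :=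
    rpow_one_add_le_one_add_mul_self (by linarith) (sq_nonneg _) (sin_sq_le_one y)
  rw [← sub_eq_add_neg, rpow_def_of_pos (by linarith)] at bernoulli
  calc exp (y ^ 2 * log (1 - ε)) ≤ exp (log (1 - ε) * sin y ^ 2) :=
        exp_le_exp.2 (by nlinarith [sin_sq_le_sq (x := y)])
    _ ≤ 1 - ε * sin y ^ 2 := by linarith

theorem neg_one_div_log_one_sub_mem_admissible {ε : ℝ} (hε0 : 0 < ε) (hε1 : ε < 1) :
    -1 / log (1 - ε) ∈ admissible ε := by
  have hlog : log (1 - ε) < 0 := log_neg (by linarith) (by linarith)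
  refine ⟨div_pos_of_neg_of_neg (by norm_num) hlog, fun y => ?_⟩
  have hdiv : y ^ 2 / (-1 / log (1 - ε)) = -(y ^ 2 * log (1 - ε)) := by
    field_simp
  calc (1 : ℝ) = exp (-(y ^ 2 * log (1 - ε))) * exp (y ^ 2 * log (1 - ε)) := by
        rw [← exp_add, neg_add_cancel, exp_zero]
    _ ≤ exp (y ^ 2 / (-1 / log (1 - ε))) * (1 - ε * sin y ^ 2) := by
        rw [hdiv]
        exact mul_le_mul_of_nonneg_left (exp_sq_mul_log_one_sub_le hε0.le hε1 y) (exp_pos _).le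

theorem le_neg_pi_sq_div_of_mem_admissible {ε c : ℝ} (hε0 : 0 < ε) (hε1 : ε < 1) (hc : c ∈ admissible ε) :
    c ≤ -(π ^ 2) / (4 * log (1 - ε)) := by
  obtain ⟨hc0, hc⟩ := hc
  have h := hc (π / 2)
  rw [sin_pi_div_two, one_pow, mul_one] at h
  have h1ε : 0 < 1 - ε := by linarith
  have hlog : 0 ≤ (π / 2) ^ 2 / c + log (1 - ε) := by
    simpa [log_mul (exp_pos _).ne' h1ε.ne'] using log_nonneg h
  rw [le_div_iff_of_neg (by linarith [log_neg h1ε (by linarith)])]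
  have hcancel : (π / 2) ^ 2 / c * c = (π / 2) ^ 2 := div_mul_cancel₀ _ hc0.ne'
  nlinarith

theorem exp_mul_one_sub_le_one (a : ℝ) : exp a * (1 - a) ≤ 1 :=
  calc exp a * (1 - a) ≤ exp a * exp (-a) :=
        mul_le_mul_of_nonneg_left (one_sub_le_exp_neg a) (exp_pos a).le
    _ = 1 := by rw [← exp_add, add_neg_cancel, exp_zero]

theorem exists_sq_lt_mul_sin_sq {k : ℝ} (hk : 1 < k) : ∃ y : ℝ, y ^ 2 < k * sin y ^ 2 := by
  have hsinc : ∀ᶠ y in 𝓝 0, k⁻¹ < sinc y ^ 2 :=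
    ((continuous_sinc.tendsto 0).pow 2).eventually
      (lt_mem_nhds (by simpa using inv_lt_one_of_one_lt₀ hk))
  obtain ⟨y, hy, hy0⟩ :=
    ((hsinc.filter_mono nhdsWithin_le_nhds).and self_mem_nhdsWithin :
      ∀ᶠ y in 𝓝[≠] (0 : ℝ), _ ∧ y ≠ 0).exists
  refine ⟨y, ?_⟩
  have hsin : sin y = y * sinc y := by rw [sinc_of_ne_zero hy0]; field_simp
  have hk' : 1 < k * sinc y ^ 2 := by
    rwa [inv_lt_iff_one_lt_mul₀ (by linarith), mul_comm] at hy
  calc y ^ 2 = y ^ 2 * 1 := (mul_one _).symm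
    _ < y ^ 2 * (k * sinc y ^ 2) := mul_lt_mul_of_pos_left hk' (by positivity)
    _ = k * sin y ^ 2 := by rw [hsin]; ring

theorem le_one_div_of_mem_admissible {ε c : ℝ} (hε0 : 0 < ε) (hc : c ∈ admissible ε) :
    c ≤ 1 / ε := by
  obtain ⟨hc0, hc⟩ := hc
  by_contra! h
  obtain ⟨y, hy⟩ :=
    exists_sq_lt_mul_sin_sq (k := ε * c) (by rwa [div_lt_iff₀ hε0, mul_comm] at h)
  have hlt : y ^ 2 / c < ε * sin y ^ 2 := by
    rw [div_lt_iff₀ hc0]; linarith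
  have hlt' : exp (y ^ 2 / c) * (1 - ε * sin y ^ 2) < exp (y ^ 2 / c) * (1 - y ^ 2 / c) :=
    mul_lt_mul_of_pos_left (by linarith) (exp_pos _)
  linarith [hc y, exp_mul_one_sub_le_one (y ^ 2 / c)]

theorem stmt_17 (ε : ℝ) (hε0 : 0 < ε) (hε1 : ε < 1) :
    -1 / Real.log (1 - ε) ≤ ctilde ε ∧
      ctilde ε ≤ min (-(Real.pi ^ 2) / (4 * Real.log (1 - ε))) (1 / ε) := by
  have hmem := neg_one_div_log_one_sub_mem_admissible hε0 hε1
  have hbdd : BddAbove (admissible ε) := ⟨1 / ε, fun c hc => le_one_div_of_mem_admissible hε0 hc⟩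
  rw [ctilde_eq_sSup_admissible]
  exact ⟨le_csSup hbdd hmem, csSup_le ⟨_, hmem⟩ fun c hc =>
    le_min (le_neg_pi_sq_div_of_mem_admissible hε0 hε1 hc) (le_one_div_of_mem_admissible hε0 hc)⟩
end

section
/- For every $\varepsilon \in [0, 2/3]$ and every $y \in \mathbb{R}$: $e^{\varepsilon y^2}(1 - \varepsilon \sin^2 y) \ge 1$. -/
/-!
Write `g y = exp (ε y²) (1 - ε sin² y)`, so `g 0 = 1` and `g` is even, and
`g' y = 2ε exp (ε y²) h y` with `h y = y (1 - ε sin² y) - sin y cos y`. It suffices that `h ≥ 0`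
for `y ≥ 0`. For large `y` this is clear since `1 - ε sin² y ≥ 1/3` and `sin y cos y ≤ 1/2`. On
`[0, π]`, `h 0 = 0` and `h' y = sin y ((2 - ε) sin y - 2ε y cos y)`; the hypothesis `ε ≤ 2/3`
means `2 - ε ≥ 2ε`, so `h' ≥ 0` follows from `y cos y ≤ sin y`, i.e. from `y ≤ tan y`.
-/

open Real Set

lemma monotoneOn_of_forall_hasDerivAt_nonneg {D : Set ℝ} (hD : Convex ℝ D) {f f' : ℝ → ℝ}
    (hf : ∀ x, HasDerivAt f (f' x) x) (hf' : ∀ x ∈ D, 0 ≤ f' x) : MonotoneOn f D :=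
  monotoneOn_of_hasDerivWithinAt_nonneg hD (fun x _ ↦ (hf x).continuousAt.continuousWithinAt)
    (fun x _ ↦ (hf x).hasDerivWithinAt) fun x hx ↦ hf' x (interior_subset hx)

lemma mul_cos_le_sin {y : ℝ} (h0 : 0 ≤ y) (hπ : y ≤ π) : y * cos y ≤ sin y := by
  rcases le_or_gt (cos y) 0 with hc | hc
  · nlinarith [sin_nonneg_of_nonneg_of_le_pi h0 hπ]
  · have hy : y < π / 2 := by
      by_contra! h
      linarith [cos_nonpos_of_pi_div_two_le_of_le h (by linarith)]
    have := le_tan h0 hy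
    rwa [tan_eq_sin_div_cos, le_div_iff₀ hc] at this

lemma hasDerivAt_mul_one_sub_sin_sq_sub_sin_mul_cos (ε y : ℝ) :
    HasDerivAt (fun y ↦ y * (1 - ε * sin y ^ 2) - sin y * cos y)
      (sin y * ((2 - ε) * sin y - 2 * ε * y * cos y)) y := by
  refine (((hasDerivAt_id y).mul
    (HasDerivAt.const_sub 1 (((hasDerivAt_sin y).pow 2).const_mul ε))).sub
      ((hasDerivAt_sin y).mul (hasDerivAt_cos y))).congr_deriv ?_
  simp only [id, Pi.pow_apply]
  linear_combination -sin_sq_add_cos_sq y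

lemma sin_mul_cos_le_mul_one_sub_sin_sq {ε y : ℝ} (hε0 : 0 ≤ ε) (hε : ε ≤ 2 / 3) (hy : 0 ≤ y) :
    sin y * cos y ≤ y * (1 - ε * sin y ^ 2) := by
  rcases le_or_gt y (3 / 2) with hy' | hy'
  · have hmono := monotoneOn_of_forall_hasDerivAt_nonneg (convex_Icc 0 π)
      (hasDerivAt_mul_one_sub_sin_sq_sub_sin_mul_cos ε) fun x ⟨hx0, hxπ⟩ ↦ by
        have hcos := mul_cos_le_sin hx0 hxπ
        have hsin := sin_nonneg_of_nonneg_of_le_pi hx0 hxπ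
        have : 0 ≤ (2 - ε) * sin x - 2 * ε * x * cos x := by nlinarith
        positivity
    simpa using hmono ⟨le_rfl, pi_pos.le⟩ ⟨hy, by linarith [pi_gt_three]⟩ hy
  · have hsc : sin y * cos y ≤ 1 / 2 := by
      nlinarith [sq_nonneg (sin y - cos y), sin_sq_add_cos_sq y]
    have hthird : 1 / 3 ≤ 1 - ε * sin y ^ 2 := by nlinarith [sin_sq_le_one y, sq_nonneg (sin y)]
    nlinarith

lemma hasDerivAt_exp_mul_sq_mul_one_sub_sin_sq (ε y : ℝ) :
    HasDerivAt (fun y ↦ exp (ε * y ^ 2) * (1 - ε * sin y ^ 2))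
      (2 * ε * exp (ε * y ^ 2) * (y * (1 - ε * sin y ^ 2) - sin y * cos y)) y := by
  refine ((((hasDerivAt_pow 2 y).const_mul ε).exp).mul
    (HasDerivAt.const_sub 1 (((hasDerivAt_sin y).pow 2).const_mul ε))).congr_deriv ?_
  simp only [Pi.pow_apply]
  ring

lemma one_le_exp_mul_sq_mul_one_sub_sin_sq_of_nonneg {ε y : ℝ} (hε0 : 0 ≤ ε) (hε : ε ≤ 2 / 3)
    (hy : 0 ≤ y) : 1 ≤ exp (ε * y ^ 2) * (1 - ε * sin y ^ 2) := by
  have hmono := monotoneOn_of_forall_hasDerivAt_nonneg (convex_Ici 0)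
    (hasDerivAt_exp_mul_sq_mul_one_sub_sin_sq ε) fun x hx ↦ by
      have hh := sin_mul_cos_le_mul_one_sub_sin_sq hε0 hε hx
      have : 0 ≤ x * (1 - ε * sin x ^ 2) - sin x * cos x := by linarith
      positivity
  simpa using hmono self_mem_Ici hy hy

theorem stmt_18 (ε : ℝ) (hε0 : 0 ≤ ε) (hε : ε ≤ 2 / 3) (y : ℝ) :
    1 ≤ Real.exp (ε * y ^ 2) * (1 - ε * Real.sin y ^ 2) := by
  rcases le_total 0 y with hy | hy
  · exact one_le_exp_mul_sq_mul_one_sub_sin_sq_of_nonneg hε0 hε hy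
  · simpa using one_le_exp_mul_sq_mul_one_sub_sin_sq_of_nonneg hε0 hε (neg_nonneg.2 hy)
end
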